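/- arXiv:math/0410105 — 6 statements merged into one kernel-verified Lean document; each statement's English description precedes it below -/
import Mathlib

section
/- A sequence (X_n) adapted to a filtration (G_n) is G-c.i.d. if and only if for every finite G-stopping time T, X_{T+1} has the same distribution as X_1. -/
open MeasureTheory Filter

/-- `(X n)` (indexed from 1) is conditionally identically distributed with respect to `𝒢`. -/
def IsCID {Ω E : Type*} {mΩ : MeasurableSpace Ω} [MeasurableSpace E]
    (μ : Measure Ω) (𝒢 : Filtration ℕ mΩ) (X : ℕ → Ω → E) : Prop :=
  ∀ (f : E → ℝ), Measurable f → (∃ C, ∀ x, |f x| ≤ C) →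
    ∀ n k : ℕ, n < k →
      μ[(fun ω => f (X k ω)) | 𝒢 n] =ᵐ[μ] μ[(fun ω => f (X (n + 1) ω)) | 𝒢 n]

/-!
Both directions compare `X` stopped at two stopping times that differ only on an event `A`.
If `T ≤ N + 1`, then `T` and `min T N` differ only on `A = {N < T} ∈ 𝒢 N`, where they stop `X`
at `N + 2` and `N + 1`; the c.i.d. property in its set-integral form
`∫_A f(X k) = ∫_A f(X (n + 1))` (`A ∈ 𝒢 n`, `n < k`) makes the two expectations agree, so by
induction `E f(X (T + 1)) = E f(X 1)` for bounded `T`, and dominated convergence removes the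
bound. Conversely, the stopping time equal to `n` on `A ∈ 𝒢 n` and to `k - 1` off `A` has the
same stopped law as the constant time `k - 1`, which yields the set-integral form.
-/

open Topology

section

variable {Ω E : Type*} {mΩ : MeasurableSpace Ω} [MeasurableSpace E] {μ : Measure Ω}

lemma integrable_comp_of_abs_le [IsFiniteMeasure μ] {Y : Ω → E} (hY : Measurable Y)
    {f : E → ℝ} (hf : Measurable f) {C : ℝ} (hC : ∀ x, |f x| ≤ C) :
    Integrable (fun ω => f (Y ω)) μ :=
  .of_bound (hf.comp hY).aestronglyMeasurable C (ae_of_all _ fun ω => hC (Y ω))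

lemma integral_eq_integral_iff_setIntegral_eq_of_eqOn_compl {F : Type*} [NormedAddCommGroup F]
    [NormedSpace ℝ F] {g h : Ω → F} {A : Set Ω} (hA : MeasurableSet A) (hg : Integrable g μ)
    (hh : Integrable h μ) (hgh : Set.EqOn g h Aᶜ) :
    ∫ ω, g ω ∂μ = ∫ ω, h ω ∂μ ↔ ∫ ω in A, g ω ∂μ = ∫ ω in A, h ω ∂μ := by
  rw [← integral_add_compl hA hg, ← integral_add_compl hA hh,
    setIntegral_congr_fun hA.compl hgh, add_left_inj]

lemma map_eq_map_iff_forall_integral_comp_eq [IsFiniteMeasure μ] {Y Z : Ω → E}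
    (hY : Measurable Y) (hZ : Measurable Z) :
    μ.map Y = μ.map Z ↔ ∀ f : E → ℝ, Measurable f → (∃ C, ∀ x, |f x| ≤ C) →
      ∫ ω, f (Y ω) ∂μ = ∫ ω, f (Z ω) ∂μ := by
  refine ⟨fun h f hf _ => ?_, fun h => Measure.ext fun s hs => ?_⟩
  · rw [← integral_map hY.aemeasurable hf.aestronglyMeasurable, h,
      integral_map hZ.aemeasurable hf.aestronglyMeasurable]
  · have hind : Measurable (s.indicator (1 : E → ℝ)) := measurable_one.indicator hs
    have hbdd : ∀ x, |s.indicator (1 : E → ℝ) x| ≤ 1 := fun x => by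
      by_cases hx : x ∈ s <;> simp [hx]
    have := h _ hind ⟨1, hbdd⟩
    rwa [← integral_map hY.aemeasurable hind.aestronglyMeasurable,
      ← integral_map hZ.aemeasurable hind.aestronglyMeasurable, integral_indicator_one hs,
      integral_indicator_one hs, measureReal_eq_measureReal_iff] at this

lemma measurable_comp_index {ι : Type*} [Countable ι] [MeasurableSpace ι]
    [MeasurableSingletonClass ι] {Y : ι → Ω → E} (hY : ∀ i, Measurable (Y i)) {T : Ω → ι}
    (hT : Measurable T) : Measurable fun ω => Y (T ω) ω :=
  (measurable_from_prod_countable_left (f := fun p : Ω × ι => Y p.2 p.1) hY).comp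
    (measurable_id.prodMk hT)

namespace MeasureTheory.IsStoppingTime

variable {𝒢 : Filtration ℕ mΩ} {T : Ω → ℕ}

lemma measurable_of_nat (hT : IsStoppingTime 𝒢 (fun ω => (T ω : WithTop ℕ))) : Measurable T :=
  measurable_to_countable' fun n =>
    𝒢.le n _ (by simpa using hT.measurableSet_eq n : MeasurableSet[𝒢 n] {ω | T ω = n})

lemma min_const_of_nat (hT : IsStoppingTime 𝒢 (fun ω => (T ω : WithTop ℕ))) (N : ℕ) :
    IsStoppingTime 𝒢 (fun ω => (min (T ω) N : ℕ) : Ω → WithTop ℕ) :=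
  (congrArg (IsStoppingTime 𝒢) (funext fun ω => WithTop.coe_min (T ω) N)).mpr (hT.min_const N)

end MeasureTheory.IsStoppingTime

lemma isStoppingTime_piecewise_const_of_nat {𝒢 : Filtration ℕ mΩ} {A : Set Ω}
    [DecidablePred (· ∈ A)] {n m : ℕ} (hnm : n ≤ m) (hA : MeasurableSet[𝒢 n] A) :
    IsStoppingTime 𝒢 (fun ω => (A.piecewise (fun _ => n) (fun _ => m) ω : WithTop ℕ)) := by
  convert isStoppingTime_piecewise_const (𝒢 := 𝒢) hnm hA using 1
  ext ω
  by_cases hω : ω ∈ A <;> simp [hω]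

section CID

variable {𝒢 : Filtration ℕ mΩ} {X : ℕ → Ω → E} [IsFiniteMeasure μ]

lemma isCID_iff_forall_setIntegral_eq (hX : ∀ n, Measurable (X (n + 1))) :
    IsCID μ 𝒢 X ↔ ∀ f : E → ℝ, Measurable f → (∃ C, ∀ x, |f x| ≤ C) → ∀ n k : ℕ, n < k →
      ∀ A, MeasurableSet[𝒢 n] A → ∫ ω in A, f (X k ω) ∂μ = ∫ ω in A, f (X (n + 1) ω) ∂μ := by
  refine forall_congr' fun f => imp_congr_right fun hf => imp_congr_right fun ⟨C, hC⟩ =>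
    forall₂_congr fun n k => imp_congr_right fun hnk => ?_
  obtain ⟨j, rfl⟩ := Nat.exists_eq_add_of_lt hnk
  have hint : ∀ m, Integrable (fun ω => f (X (m + 1) ω)) μ := fun m =>
    integrable_comp_of_abs_le (hX m) hf hC
  constructor
  · intro h A hA
    rw [← setIntegral_condExp (𝒢.le n) (hint _) hA, ← setIntegral_condExp (𝒢.le n) (hint n) hA]
    exact setIntegral_congr_ae (𝒢.le n _ hA) (h.mono fun ω hω _ => hω)
  · intro h
    refine (ae_eq_condExp_of_forall_setIntegral_eq (𝒢.le n) (hint _)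
      (fun s _ _ => integrable_condExp.integrableOn) (fun s hs _ => ?_)
      stronglyMeasurable_condExp.aestronglyMeasurable).symm
    rw [setIntegral_condExp (𝒢.le n) (hint n) hs, h s hs]

lemma IsCID.integral_comp_stopped_of_le (hX : ∀ n, Measurable (X (n + 1))) (hcid : IsCID μ 𝒢 X)
    {f : E → ℝ} (hf : Measurable f) {C : ℝ} (hC : ∀ x, |f x| ≤ C) (N : ℕ) {T : Ω → ℕ}
    (hT : IsStoppingTime 𝒢 (fun ω => (T ω : WithTop ℕ))) (hTN : ∀ ω, T ω ≤ N) :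
    ∫ ω, f (X (T ω + 1) ω) ∂μ = ∫ ω, f (X 1 ω) ∂μ := by
  induction N generalizing T with
  | zero =>
    obtain rfl : T = fun _ => 0 := funext fun ω => Nat.le_zero.1 (hTN ω)
    rfl
  | succ N ih =>
    set A := {ω | N < T ω}
    have hA : MeasurableSet[𝒢 N] A := by simpa [A] using hT.measurableSet_gt N
    have hTA : ∀ ω ∈ A, T ω = N + 1 := fun ω hω => le_antisymm (hTN ω) hω
    have hint : ∀ {S : Ω → ℕ}, IsStoppingTime 𝒢 (fun ω => (S ω : WithTop ℕ)) →
        Integrable (fun ω => f (X (S ω + 1) ω)) μ := fun hS =>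
      integrable_comp_of_abs_le (measurable_comp_index hX hS.measurable_of_nat) hf hC
    rw [← ih (hT.min_const_of_nat N) fun ω => min_le_right _ _]
    refine (integral_eq_integral_iff_setIntegral_eq_of_eqOn_compl (𝒢.le N _ hA) (hint hT)
      (hint (hT.min_const_of_nat N)) fun ω hω => ?_).2 ?_
    · rw [min_eq_left (by simpa [A] using hω)]
    calc ∫ ω in A, f (X (T ω + 1) ω) ∂μ = ∫ ω in A, f (X (N + 2) ω) ∂μ :=
          setIntegral_congr_fun (𝒢.le N _ hA) fun ω hω => by rw [hTA ω hω]
      _ = ∫ ω in A, f (X (N + 1) ω) ∂μ :=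
          (isCID_iff_forall_setIntegral_eq hX).1 hcid f hf ⟨C, hC⟩ N (N + 2) (by omega) A hA
      _ = ∫ ω in A, f (X (min (T ω) N + 1) ω) ∂μ :=
          setIntegral_congr_fun (𝒢.le N _ hA) fun ω hω => by
            rw [min_eq_right (hTA ω hω ▸ N.le_succ)]

lemma IsCID.integral_comp_stopped (hX : ∀ n, Measurable (X (n + 1))) (hcid : IsCID μ 𝒢 X)
    {f : E → ℝ} (hf : Measurable f) {C : ℝ} (hC : ∀ x, |f x| ≤ C) {T : Ω → ℕ}
    (hT : IsStoppingTime 𝒢 (fun ω => (T ω : WithTop ℕ))) :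
    ∫ ω, f (X (T ω + 1) ω) ∂μ = ∫ ω, f (X 1 ω) ∂μ := by
  have hlim : Tendsto (fun N => ∫ ω, f (X (min (T ω) N + 1) ω) ∂μ) atTop
      (𝓝 (∫ ω, f (X (T ω + 1) ω) ∂μ)) :=
    tendsto_integral_of_dominated_convergence (F := fun N ω => f (X (min (T ω) N + 1) ω))
      (fun _ => C)
      (fun N => (hf.comp (measurable_comp_index hX
        (hT.min_const_of_nat N).measurable_of_nat)).aestronglyMeasurable)
      (integrable_const C) (fun N => ae_of_all _ fun ω => hC _)
      (ae_of_all _ fun ω => tendsto_atTop_of_eventually_const fun N hN => by rw [min_eq_left hN])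
  exact tendsto_nhds_unique (hlim.congr fun N => hcid.integral_comp_stopped_of_le hX hf hC N
    (hT.min_const_of_nat N) fun ω => min_le_right _ _) tendsto_const_nhds

lemma isCID_of_forall_integral_comp_stopped (hX : ∀ n, Measurable (X (n + 1)))
    (h : ∀ T : Ω → ℕ, IsStoppingTime 𝒢 (fun ω => (T ω : WithTop ℕ)) →
      ∀ f : E → ℝ, Measurable f → (∃ C, ∀ x, |f x| ≤ C) →
        ∫ ω, f (X (T ω + 1) ω) ∂μ = ∫ ω, f (X 1 ω) ∂μ) :
    IsCID μ 𝒢 X := by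
  classical
  refine (isCID_iff_forall_setIntegral_eq hX).2 fun f hf ⟨C, hC⟩ n k hnk A hA => ?_
  obtain ⟨m, rfl⟩ : ∃ m, k = m + 1 := ⟨k - 1, by omega⟩
  set T := A.piecewise (fun _ => n) (fun _ => m)
  have hTst := isStoppingTime_piecewise_const_of_nat (Nat.le_of_lt_succ hnk) hA
  have htot : ∫ ω, f (X (T ω + 1) ω) ∂μ = ∫ ω, f (X (m + 1) ω) ∂μ :=
    (h T hTst f hf ⟨C, hC⟩).trans (h (fun _ => m) (isStoppingTime_const 𝒢 m) f hf ⟨C, hC⟩).symm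
  have hTAc : Set.EqOn (fun ω => f (X (T ω + 1) ω)) (fun ω => f (X (m + 1) ω)) Aᶜ :=
    fun ω hω => by simp only [T, Set.piecewise_eq_of_notMem _ _ _ hω]
  rw [← (integral_eq_integral_iff_setIntegral_eq_of_eqOn_compl (𝒢.le n _ hA)
    (integrable_comp_of_abs_le (measurable_comp_index hX hTst.measurable_of_nat) hf hC)
    (integrable_comp_of_abs_le (hX m) hf hC) hTAc).1 htot]
  exact setIntegral_congr_fun (𝒢.le n _ hA) fun ω hω => by rw [Set.piecewise_eq_of_mem _ _ _ hω]

lemma isCID_iff_forall_integral_comp_stopped (hX : ∀ n, Measurable (X (n + 1))) :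
    IsCID μ 𝒢 X ↔ ∀ T : Ω → ℕ, IsStoppingTime 𝒢 (fun ω => (T ω : WithTop ℕ)) →
      ∀ f : E → ℝ, Measurable f → (∃ C, ∀ x, |f x| ≤ C) →
        ∫ ω, f (X (T ω + 1) ω) ∂μ = ∫ ω, f (X 1 ω) ∂μ :=
  ⟨fun hcid _ hT _ hf ⟨_, hC⟩ => hcid.integral_comp_stopped hX hf hC hT,
    isCID_of_forall_integral_comp_stopped hX⟩

end CID

end

/-- A sequence `(X n)` adapted to a filtration `𝒢` is `𝒢`-c.i.d. if and only if
`X (T + 1) ∼ X 1` for every finite `𝒢`-stopping time `T` (i.e. `X S ∼ X 1` for every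
finite predictable stopping time `S = T + 1`). -/
theorem stmt1 {Ω E : Type*} {mΩ : MeasurableSpace Ω} [MeasurableSpace E]
    (μ : Measure Ω) [IsProbabilityMeasure μ] (𝒢 : Filtration ℕ mΩ) (X : ℕ → Ω → E)
    (hadp : ∀ n, 1 ≤ n → Measurable[𝒢 n] (X n)) :
    IsCID μ 𝒢 X ↔
      ∀ T : Ω → ℕ, IsStoppingTime 𝒢 (fun ω => (T ω : WithTop ℕ)) →
        Measure.map (fun ω => X (T ω + 1) ω) μ = Measure.map (X 1) μ := by
  have hX : ∀ n, Measurable (X (n + 1)) := fun n =>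
    (hadp (n + 1) n.succ_pos).mono (𝒢.le _) le_rfl
  rw [isCID_iff_forall_integral_comp_stopped hX]
  exact forall_congr' fun T => imp_congr_right fun hT =>
    (map_eq_map_iff_forall_integral_comp_eq
      (measurable_comp_index hX hT.measurable_of_nat) (hX 0)).symm
end

section
/- If (X_n) is c.i.d. with respect to its natural filtration (augmented by the trivial σ-field at time 0) and T is a finite predictable stopping time for this filtration, then the stopped sequence X_n' = X_{T ∧ n} is c.i.d. -/
/-!
On `{T ≤ n + 1}` the stopped sequence is constant from time `n + 1` on, so the two vectors
`(X'₁, …, X'ₙ, X'ₙ₊₂)` and `(X'₁, …, X'ₙ₊₁)` coincide there. On the complement `{T ≥ n + 2}` they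
coincide with the unstopped vectors `(X₁, …, Xₙ, Xₙ₊₂)` and `(X₁, …, Xₙ₊₁)`; since `T` is
predictable, this event lies in `σ(X₁, …, Xₙ)`, i.e. it is the preimage of one and the same set
under both unstopped vectors, so the c.i.d. identity of their laws survives restriction to it.
-/

open MeasureTheory Filter

/-- Condition (5): `(X n)` (indexed from 1) is c.i.d. (with respect to its natural
filtration), i.e. `[X 1, …, X n, X (n+2)] ∼ [X 1, …, X n, X (n+1)]` for all `n ≥ 0`. -/
def IsCIDnat {Ω E : Type*} {mΩ : MeasurableSpace Ω} [MeasurableSpace E]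
    (μ : Measure Ω) (X : ℕ → Ω → E) : Prop :=
  ∀ n : ℕ,
    Measure.map (fun ω (i : Fin (n + 1)) =>
        if (i : ℕ) < n then X ((i : ℕ) + 1) ω else X (n + 2) ω) μ
      = Measure.map (fun ω (i : Fin (n + 1)) => X ((i : ℕ) + 1) ω) μ

namespace MeasureTheory.Measure

variable {Ω β : Type*} {mΩ : MeasurableSpace Ω} [MeasurableSpace β] {μ : Measure Ω}
  {f g : Ω → β}

lemma map_eq_of_map_restrict_eq_of_map_restrict_compl_eq {A : Set Ω} (hA : MeasurableSet A)
    (hf : Measurable f) (hg : Measurable g)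
    (hA_eq : (μ.restrict A).map f = (μ.restrict A).map g)
    (hAc_eq : (μ.restrict Aᶜ).map f = (μ.restrict Aᶜ).map g) :
    μ.map f = μ.map g := by
  rw [← restrict_add_restrict_compl (μ := μ) hA, Measure.map_add _ _ hf, Measure.map_add _ _ hg,
    hA_eq, hAc_eq]

lemma map_restrict_preimage_eq_of_map_eq (hf : Measurable f) (hg : Measurable g)
    (hfg : μ.map f = μ.map g) {D : Set β} (hD : MeasurableSet D) :
    (μ.restrict (f ⁻¹' D)).map f = (μ.restrict (g ⁻¹' D)).map g := by
  rw [← restrict_map hf hD, ← restrict_map hg hD, hfg]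

end MeasureTheory.Measure

section Sequence

variable {Ω E : Type*} {mΩ : MeasurableSpace Ω}

def seqHeadWith (X : ℕ → Ω → E) (n m : ℕ) (ω : Ω) (i : Fin (n + 1)) : E :=
  if (i : ℕ) < n then X (i + 1) ω else X m ω

def seqHead (X : ℕ → Ω → E) (n : ℕ) (ω : Ω) (j : Fin n) : E := X (j + 1) ω

lemma seqHeadWith_succ (X : ℕ → Ω → E) (n : ℕ) :
    seqHeadWith X n (n + 1) = fun ω (i : Fin (n + 1)) => X (i + 1) ω := by
  funext ω i
  have := i.isLt
  unfold seqHeadWith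
  split_ifs
  · rfl
  · congr 1
    omega

lemma isCIDnat_iff_seqHeadWith [MeasurableSpace E] (μ : Measure Ω) (X : ℕ → Ω → E) :
    IsCIDnat μ X ↔ ∀ n, μ.map (seqHeadWith X n (n + 2)) = μ.map (seqHeadWith X n (n + 1)) := by
  simp only [seqHeadWith_succ]
  rfl

lemma init_seqHeadWith (X : ℕ → Ω → E) (n m : ℕ) (ω : Ω) :
    Fin.init (seqHeadWith X n m ω) = seqHead X n ω := by
  funext j
  simp [Fin.init, seqHeadWith, seqHead]

variable [MeasurableSpace E]

lemma measurable_seqHeadWith {X : ℕ → Ω → E} (hX : ∀ k, Measurable (X k)) (n m : ℕ) :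
    Measurable (seqHeadWith X n m) :=
  measurable_pi_lambda _ fun i => by
    unfold seqHeadWith
    split_ifs
    exacts [hX _, hX _]

lemma iSup_comap_le_comap_seqHead (X : ℕ → Ω → E) (n : ℕ) :
    ⨆ i ∈ Set.Icc 1 n, MeasurableSpace.comap (X i) inferInstance
      ≤ MeasurableSpace.comap (seqHead X n) MeasurableSpace.pi := by
  refine iSup₂_le fun i ⟨hi1, hin⟩ => ?_
  have hXi : X i = (fun x : Fin n → E => x ⟨i - 1, by omega⟩) ∘ seqHead X n := by
    funext ω
    simp only [Function.comp_apply, seqHead]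
    congr 1
    omega
  rw [hXi, ← MeasurableSpace.comap_comp]
  exact MeasurableSpace.comap_mono (measurable_pi_apply _).comap_le

lemma map_restrict_seqHeadWith_eq {μ : Measure Ω} {X : ℕ → Ω → E} (hX : ∀ k, Measurable (X k))
    {n : ℕ} (hcid : μ.map (seqHeadWith X n (n + 2)) = μ.map (seqHeadWith X n (n + 1)))
    {B : Set Ω}
    (hB : MeasurableSet[⨆ i ∈ Set.Icc 1 n, MeasurableSpace.comap (X i) inferInstance] B) :
    (μ.restrict B).map (seqHeadWith X n (n + 2))
      = (μ.restrict B).map (seqHeadWith X n (n + 1)) := by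
  obtain ⟨C, hC, rfl⟩ :=
    MeasurableSpace.measurableSet_comap.1 (iSup_comap_le_comap_seqHead X n _ hB)
  have hpre m : seqHeadWith X n m ⁻¹' (Fin.init ⁻¹' C) = seqHead X n ⁻¹' C := by
    rw [← Set.preimage_comp]
    congr 1
    funext ω
    exact init_seqHeadWith X n m ω
  have hinit : Measurable (Fin.init : (Fin (n + 1) → E) → Fin n → E) :=
    measurable_pi_lambda _ fun j => measurable_pi_apply _
  have := Measure.map_restrict_preimage_eq_of_map_eq (measurable_seqHeadWith hX _ _)
    (measurable_seqHeadWith hX _ _) hcid (hinit hC)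
  rwa [hpre, hpre] at this

lemma measurable_apply_of_measurable_index {X : ℕ → Ω → E} (hX : ∀ k, Measurable (X k))
    {τ : Ω → ℕ} (hτ : Measurable τ) :
    Measurable fun ω => X (τ ω) ω :=
  (measurable_from_prod_countable_left (f := fun p : Ω × ℕ => X p.2 p.1) hX).comp
    (measurable_id.prodMk hτ)

omit [MeasurableSpace E]

variable (X : ℕ → Ω → E) {τ : Ω → ℕ} {n : ℕ} {ω : Ω}

lemma seqHeadWith_stopped_of_le (hω : τ ω ≤ n + 1) :
    seqHeadWith (fun k ω => X (min (τ ω) k) ω) n (n + 2) ω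
      = seqHeadWith (fun k ω => X (min (τ ω) k) ω) n (n + 1) ω := by
  funext i
  dsimp only [seqHeadWith]
  split_ifs
  · rfl
  · congr 1
    omega

lemma seqHeadWith_stopped_of_ge {m : ℕ} (hm : m ≤ n + 2) (hω : n + 2 ≤ τ ω) :
    seqHeadWith (fun k ω => X (min (τ ω) k) ω) n m ω = seqHeadWith X n m ω := by
  funext i
  have := i.isLt
  dsimp only [seqHeadWith]
  split_ifs <;> congr 1 <;> omega

end Sequence

theorem stmt3_general {Ω E : Type*} {mΩ : MeasurableSpace Ω} [MeasurableSpace E]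
    (μ : Measure Ω) (X : ℕ → Ω → E)
    (hX : ∀ n, Measurable (X n))
    (hcid : IsCIDnat μ X)
    (𝒢 : Filtration ℕ mΩ)
    (h𝒢 : ∀ n, 𝒢 n = ⨆ i ∈ Set.Icc 1 n, MeasurableSpace.comap (X i) inferInstance)
    (S : Ω → ℕ) (hS : IsStoppingTime 𝒢 (fun ω => (S ω : WithTop ℕ))) :
    IsCIDnat μ (fun n ω => X (min (S ω + 1) n) ω) := by
  rw [isCIDnat_iff_seqHeadWith] at hcid ⊢
  intro n
  have hSm : Measurable S := by
    simpa only [Nat.cast_withTop, WithTop.untopD_coe] using hS.measurable'.untopD 0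
  have hYm k := measurable_apply_of_measurable_index hX
    ((hSm.add_const 1).min (measurable_const (a := k)))
  have hA𝒢 : MeasurableSet[𝒢 n] {ω | S ω ≤ n} := by
    simpa only [Nat.cast_withTop, WithTop.coe_le_coe] using hS.measurableSet_le n
  have hA := 𝒢.le n _ hA𝒢
  refine Measure.map_eq_of_map_restrict_eq_of_map_restrict_compl_eq hA
    (measurable_seqHeadWith hYm _ _) (measurable_seqHeadWith hYm _ _) ?_ ?_
  · exact Measure.map_congr (ae_restrict_of_forall_mem hA fun ω hω =>
      seqHeadWith_stopped_of_le X (τ := fun ω => S ω + 1) (Nat.succ_le_succ hω))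
  · have hstop m (hm : m ≤ n + 2) :
        (μ.restrict {ω | S ω ≤ n}ᶜ).map (seqHeadWith (fun k ω => X (min (S ω + 1) k) ω) n m)
          = (μ.restrict {ω | S ω ≤ n}ᶜ).map (seqHeadWith X n m) :=
      Measure.map_congr (ae_restrict_of_forall_mem hA.compl fun ω hω =>
        seqHeadWith_stopped_of_ge X hm (τ := fun ω => S ω + 1) (ω := ω) (by simp at hω; omega))
    rw [hstop _ le_rfl, hstop _ (by omega)]
    exact map_restrict_seqHeadWith_eq hX (hcid n) (h𝒢 n ▸ hA𝒢.compl)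

/-- If `(X n)` is c.i.d. and `T = S + 1` is a finite predictable stopping time for the
natural filtration of `(X n)`, then the stopped sequence `(X (T ∧ n))` is c.i.d. -/
theorem stmt3 {Ω E : Type*} {mΩ : MeasurableSpace Ω} [MeasurableSpace E]
    (μ : Measure Ω) [IsProbabilityMeasure μ] (X : ℕ → Ω → E)
    (hX : ∀ n, Measurable (X n))
    (hcid : IsCIDnat μ X)
    (𝒢 : Filtration ℕ mΩ)
    (h𝒢 : ∀ n, 𝒢 n = ⨆ i ∈ Set.Icc 1 n, MeasurableSpace.comap (X i) inferInstance)
    (S : Ω → ℕ) (hS : IsStoppingTime 𝒢 (fun ω => (S ω : WithTop ℕ))) :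
    IsCIDnat μ (fun n ω => X (min (S ω + 1) n) ω) :=
  stmt3_general μ X hX hcid 𝒢 h𝒢 S hS
end

section
/- In the modified Pólya urn with reinforcements (d_n) such that d_n is independent of σ(X_i, d_j : i ≤ n, j < n) for all n, the sequence of indicator variables (X_n) is c.i.d. That is, the predictive probabilities E[X_{n+1} | G_n] = (w + Σ_{i≤n} d_i X_i)/(w + r + Σ_{i≤n} d_i) form a martingale with respect to G_n = σ(X_1, d_1, ..., X_n, d_n, d_{n+1}), G_0 trivial. -/
/-!
Write `W n` and `T n` for the numbers of white balls and of all balls after `n` draws, so that the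
predictive probability is `M n = W n / T n`. Given `ℱ n` and the next reinforcement `d (n + 1)`,
the draw `X (n + 1)` still has conditional mean `M n`: `d (n + 1)` is independent of everything
generated by `ℱ n` and `X (n + 1)`, so it carries no information about the draw. Since `W n`,
`T n` and `d (n + 1)` are known at that stage, conditioning
`M (n + 1) = (W n + d (n + 1) * X (n + 1)) / (T n + d (n + 1))` gives
`(W n + d (n + 1) * M n) / (T n + d (n + 1)) = M n`. As `𝒢 0` is trivial and `𝒢 n` is exactly
`ℱ n ⊔ σ(d (n + 1))` for `n ≥ 1`, the tower property turns this into the martingale property.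
-/

open MeasureTheory ProbabilityTheory Filter

theorem isPiSystem_image2_inter {α : Type*} {S T : Set (Set α)} (hS : IsPiSystem S)
    (hT : IsPiSystem T) : IsPiSystem (Set.image2 (· ∩ ·) S T) := by
  rintro _ ⟨A, hA, B, hB, rfl⟩ _ ⟨A', hA', B', hB', rfl⟩ hne
  rw [Set.inter_inter_inter_comm] at hne ⊢
  exact ⟨_, hS A hA A' hA' hne.left, _, hT B hB B' hB' hne.right, rfl⟩

theorem MeasurableSpace.sup_eq_generateFrom_image2_inter {Ω : Type*}
    (m₁ m₂ : MeasurableSpace Ω) :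
    m₁ ⊔ m₂ =
      generateFrom (Set.image2 (· ∩ ·) {s | MeasurableSet[m₁] s} {s | MeasurableSet[m₂] s}) := by
  refine le_antisymm (sup_le (fun s hs => ?_) (fun s hs => ?_)) (generateFrom_le ?_)
  · exact measurableSet_generateFrom ⟨s, hs, Set.univ, .univ, Set.inter_univ s⟩
  · exact measurableSet_generateFrom ⟨Set.univ, .univ, s, hs, Set.univ_inter s⟩
  · rintro _ ⟨A, hA, B, hB, rfl⟩
    exact (le_sup_left (b := m₂) A hA).inter (le_sup_right (a := m₁) B hB)

theorem integral_eq_measureReal_of_zero_or_one {Ω : Type*} {mΩ : MeasurableSpace Ω}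
    {μ : Measure Ω} {Y : Ω → ℝ} (hY : Measurable Y) (h01 : ∀ ω, Y ω = 0 ∨ Y ω = 1) :
    ∫ ω, Y ω ∂μ = μ.real {ω | Y ω = 1} := by
  have hY_eq : Y = {ω | Y ω = 1}.indicator 1 := by
    funext ω
    rcases h01 ω with h | h <;> simp [h]
  calc ∫ ω, Y ω ∂μ = ∫ ω, {ω | Y ω = 1}.indicator 1 ω ∂μ := by rw [← hY_eq]
    _ = μ.real {ω | Y ω = 1} := integral_indicator_one (hY (measurableSet_singleton 1))

section CondExp

variable {Ω : Type*} {m m₀ m₁ m₂ mΩ : MeasurableSpace Ω} {μ : Measure Ω} [IsFiniteMeasure μ]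

theorem setIntegral_eq_measureReal_smul_integral_of_indep {E : Type*} [NormedAddCommGroup E]
    [NormedSpace ℝ E] [CompleteSpace E] (hm₁ : m₁ ≤ mΩ) (hm₂ : m₂ ≤ mΩ) {f : Ω → E}
    (hf : StronglyMeasurable[m₁] f) (hfi : Integrable f μ) (hindep : Indep m₁ m₂ μ)
    {s : Set Ω} (hs : MeasurableSet[m₂] s) : ∫ x in s, f x ∂μ = μ.real s • ∫ x, f x ∂μ := by
  rw [← setIntegral_condExp hm₂ hfi hs, setIntegral_congr_ae (hm₂ s hs)
    ((condExp_indep_eq hm₁ hm₂ hf hindep).mono fun _ hx _ => hx), setIntegral_const]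

theorem condExp_sup_ae_eq_of_indep (hm₁₀ : m₁ ≤ m₀) (hm₀ : m₀ ≤ mΩ) (hm₂ : m₂ ≤ mΩ)
    {f : Ω → ℝ} (hf : StronglyMeasurable[m₀] f) (hfi : Integrable f μ)
    (hindep : Indep m₀ m₂ μ) : μ[f | m₁ ⊔ m₂] =ᵐ[μ] μ[f | m₁] := by
  have hm₁ : m₁ ≤ mΩ := hm₁₀.trans hm₀
  have hm : m₁ ⊔ m₂ ≤ mΩ := sup_le hm₁ hm₂
  have hg : StronglyMeasurable[m₁] (μ[f | m₁]) := stronglyMeasurable_condExp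
  have hgi : Integrable (μ[f | m₁]) μ := integrable_condExp
  have h_inter : ∀ A, MeasurableSet[m₁] A → ∀ B, MeasurableSet[m₂] B →
      ∫ x in A ∩ B, (μ[f | m₁]) x ∂μ = ∫ x in A ∩ B, f x ∂μ := by
    intro A hA B hB
    have hA' := hm₁ A hA
    rw [Set.inter_comm, ← setIntegral_indicator hA', ← setIntegral_indicator hA',
      setIntegral_eq_measureReal_smul_integral_of_indep hm₁ hm₂ (hg.indicator hA)
        (hgi.indicator hA') (indep_of_indep_of_le_left hindep hm₁₀) hB,
      setIntegral_eq_measureReal_smul_integral_of_indep hm₀ hm₂ (hf.indicator (hm₁₀ A hA))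
        (hfi.indicator hA') hindep hB,
      integral_indicator hA', integral_indicator hA', setIntegral_condExp hm₁ hfi hA]
  -- the π-λ extension from the sets `A ∩ B`, phrased as equality of signed measures
  have h_eq : (μ.withDensityᵥ (μ[f | m₁])).trim hm = (μ.withDensityᵥ f).trim hm := by
    refine VectorMeasure.ext_of_generateFrom _ ?_
      (MeasurableSpace.sup_eq_generateFrom_image2_inter m₁ m₂)
      (isPiSystem_image2_inter (@MeasurableSpace.isPiSystem_measurableSet Ω m₁)
        (@MeasurableSpace.isPiSystem_measurableSet Ω m₂)) ?_
    · rintro _ ⟨A, hA, B, hB, rfl⟩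
      have hAB : MeasurableSet[m₁ ⊔ m₂] (A ∩ B) :=
        (le_sup_left (b := m₂) A hA).inter (le_sup_right (a := m₁) B hB)
      rw [hgi.withDensityᵥ_trim_eq_integral hm hAB, hfi.withDensityᵥ_trim_eq_integral hm hAB,
        h_inter A hA B hB]
    · rw [hgi.withDensityᵥ_trim_eq_integral hm .univ,
        hfi.withDensityᵥ_trim_eq_integral hm .univ, setIntegral_univ, setIntegral_univ,
        integral_condExp hm₁]
  refine (ae_eq_condExp_of_forall_setIntegral_eq hm hfi (fun s _ _ => hgi.integrableOn)
    (fun s hs _ => ?_)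
    ((hg.mono (le_sup_left : m₁ ≤ m₁ ⊔ m₂)).aestronglyMeasurable (μ := μ))).symm
  rw [← hgi.withDensityᵥ_trim_eq_integral hm hs, h_eq, hfi.withDensityᵥ_trim_eq_integral hm hs]

theorem condExp_add_mul_div_add_ae_eq (hm : m ≤ mΩ) {a D k Y : Ω → ℝ}
    (ha : StronglyMeasurable[m] a) (hD : StronglyMeasurable[m] D) (hk : StronglyMeasurable[m] k)
    (hD_pos : ∀ ω, 0 < D ω) (hk_nonneg : ∀ ω, 0 ≤ k ω) (hY : Integrable Y μ)
    (hYm : μ[Y | m] =ᵐ[μ] a / D) :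
    μ[fun ω => (a ω + k ω * Y ω) / (D ω + k ω) | m] =ᵐ[μ] a / D := by
  have hDk : ∀ ω, 0 < D ω + k ω := fun ω => add_pos_of_pos_of_nonneg (hD_pos ω) (hk_nonneg ω)
  set A : Ω → ℝ := fun ω => a ω / (D ω + k ω)
  set B : Ω → ℝ := fun ω => k ω / (D ω + k ω)
  have hA : StronglyMeasurable[m] A :=
    (ha.measurable.div (hD.measurable.add hk.measurable)).stronglyMeasurable
  have hB : StronglyMeasurable[m] B :=
    (hk.measurable.div (hD.measurable.add hk.measurable)).stronglyMeasurable
  have hA_le : ∀ ω, ‖A ω‖ ≤ ‖(a / D) ω‖ := fun ω => by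
    simp only [A, Pi.div_apply, norm_div, Real.norm_of_nonneg (hDk ω).le,
      Real.norm_of_nonneg (hD_pos ω).le]
    exact div_le_div_of_nonneg_left (norm_nonneg _) (hD_pos ω)
      (le_add_of_nonneg_right (hk_nonneg ω))
  have hB_le : ∀ ω, ‖B ω‖ ≤ 1 := fun ω => by
    rw [Real.norm_of_nonneg (div_nonneg (hk_nonneg ω) (hDk ω).le)]
    exact div_le_one_of_le₀ (le_add_of_nonneg_left (hD_pos ω).le) (hDk ω).le
  -- `a / D` is integrable as a version of `μ[Y | m]`, and it dominates `A`
  have hAi : Integrable A μ :=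
    (integrable_condExp.congr hYm).mono (hA.mono hm).aestronglyMeasurable (ae_of_all _ hA_le)
  have hBYi : Integrable (B * Y) μ :=
    hY.bdd_mul (hB.mono hm).aestronglyMeasurable (ae_of_all _ hB_le)
  have h_split : (fun ω => (a ω + k ω * Y ω) / (D ω + k ω)) = A + B * Y := by
    funext ω
    simp only [A, B, Pi.add_apply, Pi.mul_apply]
    ring
  have h_recombine : A + B * (a / D) = a / D := by
    funext ω
    have := (hD_pos ω).ne'
    have := (hDk ω).ne'
    simp only [A, B, Pi.add_apply, Pi.mul_apply, Pi.div_apply]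
    field_simp
  calc μ[fun ω => (a ω + k ω * Y ω) / (D ω + k ω) | m]
      = μ[A + B * Y | m] := by rw [h_split]
    _ =ᵐ[μ] μ[A | m] + μ[B * Y | m] := condExp_add hAi hBYi m
    _ =ᵐ[μ] A + B * μ[Y | m] := by
      rw [condExp_of_stronglyMeasurable hm hA hAi]
      exact (condExp_mul_of_stronglyMeasurable_left hB hBYi hY).add_left
    _ =ᵐ[μ] A + B * (a / D) := EventuallyEq.rfl.add (EventuallyEq.rfl.mul hYm)
    _ = a / D := h_recombine

theorem martingale_nat_of_condExp_succ_ae_eq {E : Type*} [NormedAddCommGroup E]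
    [NormedSpace ℝ E] [CompleteSpace E] {𝒢 : Filtration ℕ mΩ} {ℋ : ℕ → MeasurableSpace Ω}
    {f : ℕ → Ω → E} (hadp : StronglyAdapted 𝒢 f) (hint : ∀ n, Integrable (f n) μ)
    (h𝒢ℋ : ∀ n, 𝒢 n ≤ ℋ n) (hℋ : ∀ n, ℋ n ≤ mΩ) (hf : ∀ n, μ[f (n + 1) | ℋ n] =ᵐ[μ] f n) :
    Martingale f 𝒢 μ := by
  refine martingale_nat hadp hint fun n => ?_
  calc f n = μ[f n | 𝒢 n] := (condExp_of_stronglyMeasurable (𝒢.le n) (hadp n) (hint n)).symm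
    _ =ᵐ[μ] μ[μ[f (n + 1) | ℋ n] | 𝒢 n] := condExp_congr_ae (hf n).symm
    _ =ᵐ[μ] μ[f (n + 1) | 𝒢 n] := condExp_condExp_of_le (h𝒢ℋ n) (hℋ n)

end CondExp

section PolyaUrn

variable {Ω : Type*} (X : ℕ → Ω → ℝ) (d : ℕ → Ω → ℕ)

-- `σ(X 1, …, X n, d 1, …, d m)`; thus `ℱ n = urnSigma X d n n` and `𝒢 n = urnSigma X d n (n + 1)`
abbrev urnSigma (n m : ℕ) : MeasurableSpace Ω :=
  (⨆ i ∈ Set.Icc 1 n, MeasurableSpace.comap (X i) inferInstance) ⊔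
    (⨆ j ∈ Set.Icc 1 m, MeasurableSpace.comap (d j) inferInstance)

-- the numbers of white balls and of all balls in the urn after `n` draws
def urnWhite (w : ℝ) (n : ℕ) (ω : Ω) : ℝ := w + ∑ i ∈ Finset.Icc 1 n, (d i ω : ℝ) * X i ω

def urnTotal (w r : ℝ) (n : ℕ) (ω : Ω) : ℝ := w + r + ∑ i ∈ Finset.Icc 1 n, (d i ω : ℝ)

variable {X d}

theorem urnSigma_mono {n n' m m' : ℕ} (hn : n ≤ n') (hm : m ≤ m') :
    urnSigma X d n m ≤ urnSigma X d n' m' :=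
  sup_le_sup (biSup_mono fun _ hi => ⟨hi.1, hi.2.trans hn⟩)
    (biSup_mono fun _ hj => ⟨hj.1, hj.2.trans hm⟩)

theorem measurable_X_urnSigma {n m i : ℕ} (hi : i ∈ Set.Icc 1 n) :
    Measurable[urnSigma X d n m] (X i) :=
  Measurable.of_comap_le (le_sup_of_le_left
    (le_biSup (fun i => MeasurableSpace.comap (X i) inferInstance) hi))

theorem measurable_d_urnSigma {n m j : ℕ} (hj : j ∈ Set.Icc 1 m) :
    Measurable[urnSigma X d n m] (d j) :=
  Measurable.of_comap_le (le_sup_of_le_right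
    (le_biSup (fun j => MeasurableSpace.comap (d j) inferInstance) hj))

theorem urnSigma_zero_zero : urnSigma X d 0 0 = ⊥ := by
  simp [urnSigma]

theorem urnSigma_succ_right (n m : ℕ) :
    urnSigma X d n (m + 1) =
      urnSigma X d n m ⊔ MeasurableSpace.comap (d (m + 1)) inferInstance := by
  have hIcc : Set.Icc 1 (m + 1) = insert (m + 1) (Set.Icc 1 m) := by
    ext j; simp only [Set.mem_Icc, Set.mem_insert_iff]; omega
  rw [urnSigma, urnSigma, hIcc, iSup_insert, sup_comm (MeasurableSpace.comap (d (m + 1)) _),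
    ← sup_assoc]

theorem urnSigma_le [mΩ : MeasurableSpace Ω] (hX : ∀ i, Measurable (X i))
    (hd : ∀ j, Measurable (d j)) (n m : ℕ) : urnSigma X d n m ≤ mΩ :=
  sup_le (iSup₂_le fun i _ => (hX i).comap_le) (iSup₂_le fun j _ => (hd j).comap_le)

theorem measurable_urnWhite (w : ℝ) (n : ℕ) :
    Measurable[urnSigma X d n n] (urnWhite X d w n) :=
  measurable_const.add <| Finset.measurable_sum _ fun _ hi =>
    (measurable_from_top.comp (measurable_d_urnSigma (Finset.mem_Icc.mp hi))).mul
      (measurable_X_urnSigma (Finset.mem_Icc.mp hi))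

theorem measurable_urnTotal (w r : ℝ) (n : ℕ) :
    Measurable[urnSigma X d n n] (urnTotal d w r n) :=
  measurable_const.add <| Finset.measurable_sum _ fun _ hi =>
    measurable_from_top.comp (measurable_d_urnSigma (Finset.mem_Icc.mp hi))

theorem measurable_urnWhite_div_urnTotal (w r : ℝ) (n : ℕ) :
    Measurable[urnSigma X d n n] (urnWhite X d w n / urnTotal d w r n) :=
  (measurable_urnWhite w n).div (measurable_urnTotal w r n)

theorem urnWhite_succ (w : ℝ) (n : ℕ) (ω : Ω) :
    urnWhite X d w (n + 1) ω = urnWhite X d w n ω + d (n + 1) ω * X (n + 1) ω := by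
  simp only [urnWhite, Finset.sum_Icc_succ_top (Nat.le_add_left 1 n)]
  ring

theorem urnTotal_succ (w r : ℝ) (n : ℕ) (ω : Ω) :
    urnTotal d w r (n + 1) ω = urnTotal d w r n ω + d (n + 1) ω := by
  simp only [urnTotal, Finset.sum_Icc_succ_top (Nat.le_add_left 1 n)]
  ring

theorem urnWhite_div_urnTotal_zero (w r : ℝ) :
    urnWhite X d w 0 / urnTotal d w r 0 = fun _ => w / (w + r) := by
  funext ω
  simp [urnWhite, urnTotal]

theorem urnTotal_pos {w r : ℝ} (hwr : 0 < w + r) (n : ℕ) (ω : Ω) : 0 < urnTotal d w r n ω :=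
  add_pos_of_pos_of_nonneg hwr (Finset.sum_nonneg fun _ _ => Nat.cast_nonneg _)

theorem urnWhite_div_urnTotal_mem_Icc {w r : ℝ} (hw : 0 ≤ w) (hr : 0 ≤ r)
    (hX01 : ∀ i, 1 ≤ i → ∀ ω, X i ω ∈ Set.Icc 0 1) (n : ℕ) (ω : Ω) :
    urnWhite X d w n ω / urnTotal d w r n ω ∈ Set.Icc 0 1 := by
  have hXi : ∀ i ∈ Finset.Icc 1 n, X i ω ∈ Set.Icc 0 1 := fun i hi =>
    hX01 i (Finset.mem_Icc.mp hi).1 ω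
  have h_white : 0 ≤ urnWhite X d w n ω :=
    add_nonneg hw (Finset.sum_nonneg fun i hi => mul_nonneg (Nat.cast_nonneg _) (hXi i hi).1)
  have h_le : urnWhite X d w n ω ≤ urnTotal d w r n ω := by
    have h_sum : ∑ i ∈ Finset.Icc 1 n, (d i ω : ℝ) * X i ω ≤ ∑ i ∈ Finset.Icc 1 n, (d i ω : ℝ) :=
      Finset.sum_le_sum fun i hi => mul_le_of_le_one_right (Nat.cast_nonneg _) (hXi i hi).2
    simp only [urnWhite, urnTotal]
    linarith
  exact ⟨div_nonneg h_white (h_white.trans h_le), div_le_one_of_le₀ h_le (h_white.trans h_le)⟩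

theorem integrable_urnWhite_div_urnTotal [mΩ : MeasurableSpace Ω] {μ : Measure Ω}
    [IsFiniteMeasure μ] (hX : ∀ i, Measurable (X i)) (hd : ∀ j, Measurable (d j)) {w r : ℝ}
    (hw : 0 ≤ w) (hr : 0 ≤ r) (hX01 : ∀ i, 1 ≤ i → ∀ ω, X i ω ∈ Set.Icc 0 1) (n : ℕ) :
    Integrable (urnWhite X d w n / urnTotal d w r n) μ :=
  Integrable.of_mem_Icc 0 1
    ((measurable_urnWhite_div_urnTotal w r n).mono (urnSigma_le hX hd n n) le_rfl).aemeasurable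
    (ae_of_all _ (urnWhite_div_urnTotal_mem_Icc hw hr hX01 n))

theorem condExp_urnSigma_succ_right_ae_eq [mΩ : MeasurableSpace Ω] {μ : Measure Ω}
    [IsFiniteMeasure μ] (hX : ∀ i, Measurable (X i)) (hd : ∀ j, Measurable (d j)) {n : ℕ}
    (hindep : Indep (urnSigma X d (n + 1) n) (MeasurableSpace.comap (d (n + 1)) inferInstance) μ)
    (hXi : Integrable (X (n + 1)) μ) {g : Ω → ℝ}
    (hcond : μ[X (n + 1) | urnSigma X d n n] =ᵐ[μ] g) :
    μ[X (n + 1) | urnSigma X d n (n + 1)] =ᵐ[μ] g := by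
  rw [urnSigma_succ_right]
  exact (condExp_sup_ae_eq_of_indep (urnSigma_mono n.le_succ le_rfl) (urnSigma_le hX hd _ _)
    (hd (n + 1)).comap_le (measurable_X_urnSigma ⟨n.succ_pos, le_rfl⟩).stronglyMeasurable hXi
    hindep).trans hcond

theorem condExp_urn_succ_ae_eq [mΩ : MeasurableSpace Ω] {μ : Measure Ω} [IsFiniteMeasure μ]
    (hX : ∀ i, Measurable (X i)) (hd : ∀ j, Measurable (d j)) {w r : ℝ} (hwr : 0 < w + r) {n : ℕ}
    (hXi : Integrable (X (n + 1)) μ)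
    (hcond : μ[X (n + 1) | urnSigma X d n (n + 1)] =ᵐ[μ] urnWhite X d w n / urnTotal d w r n) :
    μ[urnWhite X d w (n + 1) / urnTotal d w r (n + 1) | urnSigma X d n (n + 1)] =ᵐ[μ]
      urnWhite X d w n / urnTotal d w r n := by
  have h_le := urnSigma_mono (X := X) (d := d) (le_refl n) n.le_succ
  have h_eq : urnWhite X d w (n + 1) / urnTotal d w r (n + 1) = fun ω =>
      (urnWhite X d w n ω + d (n + 1) ω * X (n + 1) ω) / (urnTotal d w r n ω + d (n + 1) ω) := by
    funext ω
    rw [Pi.div_apply, urnWhite_succ, urnTotal_succ]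
  rw [h_eq]
  exact condExp_add_mul_div_add_ae_eq (urnSigma_le hX hd n (n + 1))
    ((measurable_urnWhite w n).mono h_le le_rfl).stronglyMeasurable
    ((measurable_urnTotal w r n).mono h_le le_rfl).stronglyMeasurable
    (measurable_from_top.comp (measurable_d_urnSigma ⟨n.succ_pos, le_rfl⟩)).stronglyMeasurable
    (urnTotal_pos hwr n) (fun _ => Nat.cast_nonneg _) hXi hcond

end PolyaUrn

theorem stmt6_general {Ω : Type*} {mΩ : MeasurableSpace Ω}
    (μ : Measure Ω) [IsProbabilityMeasure μ]
    (w r : ℝ) (hw : 0 < w) (hr : 0 < r)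
    (X : ℕ → Ω → ℝ) (d : ℕ → Ω → ℕ)
    (hX : ∀ n, Measurable (X n)) (hd : ∀ n, Measurable (d n))
    (hind : ∀ n, 1 ≤ n → ∀ ω, X n ω = 0 ∨ X n ω = 1)
    -- `ℱ n = σ(X 1, d 1, …, X n, d n)`
    (ℱ : ℕ → MeasurableSpace Ω)
    (hℱ : ∀ n, ℱ n = (⨆ i ∈ Set.Icc 1 n, MeasurableSpace.comap (X i) inferInstance) ⊔
        (⨆ j ∈ Set.Icc 1 n, MeasurableSpace.comap (d j) inferInstance))
    -- (i): `d n` is independent of `σ(X i, d j : i ≤ n, j < n)`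
    (hindep : ∀ n, 1 ≤ n → Indep (MeasurableSpace.comap (d n) inferInstance)
        ((⨆ i ∈ Set.Icc 1 n, MeasurableSpace.comap (X i) inferInstance) ⊔
          (⨆ j ∈ Set.Icc 1 (n - 1), MeasurableSpace.comap (d j) inferInstance)) μ)
    -- `P(X 1 = 1) = w / (w + r)`
    (hinit : μ {ω | X 1 ω = 1} = ENNReal.ofReal (w / (w + r)))
    -- predictive probabilities of the urn scheme
    (hpred : ∀ n, 1 ≤ n →
      μ[X (n + 1) | ℱ n] =ᵐ[μ]
        fun ω => (w + ∑ i ∈ Finset.Icc 1 n, (d i ω : ℝ) * X i ω) /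
          (w + r + ∑ i ∈ Finset.Icc 1 n, (d i ω : ℝ)))
    (𝒢 : Filtration ℕ mΩ)
    (h𝒢0 : 𝒢 0 = (⊥ : MeasurableSpace Ω))
    (h𝒢 : ∀ n, 1 ≤ n → 𝒢 n =
        (⨆ i ∈ Set.Icc 1 n, MeasurableSpace.comap (X i) inferInstance) ⊔
        (⨆ j ∈ Set.Icc 1 (n + 1), MeasurableSpace.comap (d j) inferInstance)) :
    Martingale (fun n ω => (w + ∑ i ∈ Finset.Icc 1 n, (d i ω : ℝ) * X i ω) /
        (w + r + ∑ i ∈ Finset.Icc 1 n, (d i ω : ℝ))) 𝒢 μ := by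
  obtain rfl : ℱ = fun n => urnSigma X d n n := funext hℱ
  change Martingale (fun n => urnWhite X d w n / urnTotal d w r n) 𝒢 μ
  have hX01 : ∀ i, 1 ≤ i → ∀ ω, X i ω ∈ Set.Icc (0 : ℝ) 1 := fun i hi ω => by
    rcases hind i hi ω with h | h <;> simp [h]
  have hXi : ∀ n, Integrable (X (n + 1)) μ := fun n =>
    Integrable.of_mem_Icc 0 1 (hX (n + 1)).aemeasurable (ae_of_all _ (hX01 (n + 1) n.succ_pos))
  have hcond : ∀ n,
      μ[X (n + 1) | urnSigma X d n n] =ᵐ[μ] urnWhite X d w n / urnTotal d w r n := by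
    rintro (_ | n)
    · rw [urnSigma_zero_zero, condExp_bot, urnWhite_div_urnTotal_zero,
        integral_eq_measureReal_of_zero_or_one (hX 1) (hind 1 le_rfl), measureReal_def, hinit,
        ENNReal.toReal_ofReal (by positivity)]
    · exact hpred (n + 1) n.succ_pos
  have h𝒢_le : ∀ n, 𝒢 n ≤ urnSigma X d n (n + 1) := by
    rintro (_ | n)
    · exact h𝒢0 ▸ bot_le
    · exact (h𝒢 (n + 1) n.succ_pos).le
  refine martingale_nat_of_condExp_succ_ae_eq (fun n => ?_)
    (integrable_urnWhite_div_urnTotal hX hd hw.le hr.le hX01) h𝒢_le (urnSigma_le hX hd · _)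
    fun n => condExp_urn_succ_ae_eq hX hd (by linarith) (hXi n)
      (condExp_urnSigma_succ_right_ae_eq hX hd (hindep (n + 1) n.succ_pos).symm (hXi n) (hcond n))
  rcases n with _ | n
  · rw [urnWhite_div_urnTotal_zero]
    exact stronglyMeasurable_const
  · exact ((measurable_urnWhite_div_urnTotal w r _).mono
      ((urnSigma_mono le_rfl (n + 1).le_succ).trans (h𝒢 (n + 1) n.succ_pos).ge)
      le_rfl).stronglyMeasurable

/-- Modified Pólya urn: `w > 0` white and `r > 0` red balls; at time `n` a ball is drawn
and replaced together with `d n ≥ 1` balls of the same colour, `X n` being the indicator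
of a white draw. If each `d n` is independent of `σ(X i, d j : i ≤ n, j < n)`, then
`(X n)` is c.i.d.: the predictive probabilities
`M n = (w + ∑_{i ≤ n} d i * X i) / (w + r + ∑_{i ≤ n} d i)` form a martingale with respect
to `𝒢 n = σ(X 1, d 1, …, X n, d n, d (n+1))`, `𝒢 0` trivial. -/
theorem stmt6 {Ω : Type*} {mΩ : MeasurableSpace Ω}
    (μ : Measure Ω) [IsProbabilityMeasure μ]
    (w r : ℝ) (hw : 0 < w) (hr : 0 < r)
    (X : ℕ → Ω → ℝ) (d : ℕ → Ω → ℕ)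
    (hX : ∀ n, Measurable (X n)) (hd : ∀ n, Measurable (d n))
    (hind : ∀ n, 1 ≤ n → ∀ ω, X n ω = 0 ∨ X n ω = 1)
    (hd1 : ∀ n, 1 ≤ n → ∀ ω, 1 ≤ d n ω)
    -- `ℱ n = σ(X 1, d 1, …, X n, d n)`
    (ℱ : ℕ → MeasurableSpace Ω)
    (hℱ : ∀ n, ℱ n = (⨆ i ∈ Set.Icc 1 n, MeasurableSpace.comap (X i) inferInstance) ⊔
        (⨆ j ∈ Set.Icc 1 n, MeasurableSpace.comap (d j) inferInstance))
    -- (i): `d n` is independent of `σ(X i, d j : i ≤ n, j < n)`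
    (hindep : ∀ n, 1 ≤ n → Indep (MeasurableSpace.comap (d n) inferInstance)
        ((⨆ i ∈ Set.Icc 1 n, MeasurableSpace.comap (X i) inferInstance) ⊔
          (⨆ j ∈ Set.Icc 1 (n - 1), MeasurableSpace.comap (d j) inferInstance)) μ)
    -- `P(X 1 = 1) = w / (w + r)`
    (hinit : μ {ω | X 1 ω = 1} = ENNReal.ofReal (w / (w + r)))
    -- predictive probabilities of the urn scheme
    (hpred : ∀ n, 1 ≤ n →
      μ[X (n + 1) | ℱ n] =ᵐ[μ]
        fun ω => (w + ∑ i ∈ Finset.Icc 1 n, (d i ω : ℝ) * X i ω) /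
          (w + r + ∑ i ∈ Finset.Icc 1 n, (d i ω : ℝ)))
    (𝒢 : Filtration ℕ mΩ)
    (h𝒢0 : 𝒢 0 = (⊥ : MeasurableSpace Ω))
    (h𝒢 : ∀ n, 1 ≤ n → 𝒢 n =
        (⨆ i ∈ Set.Icc 1 n, MeasurableSpace.comap (X i) inferInstance) ⊔
        (⨆ j ∈ Set.Icc 1 (n + 1), MeasurableSpace.comap (d j) inferInstance)) :
    Martingale (fun n ω => (w + ∑ i ∈ Finset.Icc 1 n, (d i ω : ℝ) * X i ω) /
        (w + r + ∑ i ∈ Finset.Icc 1 n, (d i ω : ℝ))) 𝒢 μ :=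
  stmt6_general μ w r hw hr X d hX hd hind ℱ hℱ hindep hinit hpred 𝒢 h𝒢0 h𝒢
end

section
/- If (X_n) is G-c.i.d. and f : E → ℝ is measurable with E|f(X_1)| < ∞, then there is an integrable random variable V_f such that E[f(X_{n+1}) | G_n] → V_f almost surely and in L¹, and E[V_f | G_n] = E[f(X_{n+1}) | G_n] a.s. for every n ≥ 0. -/
/-! All `X k` with `k ≥ 1` have the law of `X 1`, so the c.i.d. identities for bounded test
functions extend to integrable `f` by `L¹`-approximation with simple functions. By the tower
property `E[f (X (n+1)) | 𝒢 n]` is then a martingale, uniformly integrable because the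
`f (X (n+1))` are identically distributed and conditioning preserves uniform integrability; the
`L¹` martingale convergence theorem yields `V`. -/

open MeasureTheory Filter

open ProbabilityTheory

open scoped ENNReal NNReal

namespace MeasureTheory

variable {Ω : Type*} {m m0 : MeasurableSpace Ω} {μ : Measure Ω}

theorem eLpNorm_indicator_condExp_le {Y : Ω → ℝ} (hY : Integrable Y μ) {s : Set Ω}
    (hs : MeasurableSet[m] s) :
    eLpNorm (s.indicator (μ[Y|m])) 1 μ ≤ eLpNorm (s.indicator Y) 1 μ := by
  rw [← eLpNorm_congr_ae (condExp_indicator hY hs)]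
  exact eLpNorm_condExp_le_eLpNorm _ le_rfl

theorem exists_forall_meas_nnnorm_ge_le {ι : Type*} {g : ι → Ω → ℝ}
    (hg : ∀ i, AEStronglyMeasurable (g i) μ) {R : ℝ≥0} (hR : ∀ i, eLpNorm (g i) 1 μ ≤ R)
    {δ : ℝ} (hδ : 0 < δ) :
    ∃ C : ℝ≥0, ∀ i, μ {x | C ≤ ‖g i x‖₊} ≤ ENNReal.ofReal δ := by
  set δ' : ℝ≥0 := δ.toNNReal
  have hδ' : δ' ≠ 0 := (Real.toNNReal_pos.2 hδ).ne'
  refine ⟨R / δ' + 1, fun i => ?_⟩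
  have hC : ((R / δ' + 1 : ℝ≥0) : ℝ≥0∞) ≠ 0 := by simp
  have hmarkov := mul_meas_ge_le_pow_eLpNorm' μ one_ne_zero ENNReal.one_ne_top (hg i)
    ((R / δ' + 1 : ℝ≥0) : ℝ≥0∞)
  simp only [ENNReal.toReal_one, ENNReal.rpow_one, enorm_eq_nnnorm, ENNReal.coe_le_coe] at hmarkov
  refine (ENNReal.mul_le_mul_iff_right hC ENNReal.coe_ne_top).1 (hmarkov.trans ((hR i).trans ?_))
  rw [ENNReal.ofReal, ← ENNReal.coe_mul, ENNReal.coe_le_coe, add_mul, div_mul_cancel₀ _ hδ']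
  exact le_self_add

theorem UniformIntegrable.condExp [IsFiniteMeasure μ] {ι : Type*} {Y : ι → Ω → ℝ}
    (hY : UniformIntegrable Y 1 μ) {ℱ : ι → MeasurableSpace Ω} (hℱ : ∀ i, ℱ i ≤ m0) :
    UniformIntegrable (fun i => μ[Y i|ℱ i]) 1 μ := by
  obtain ⟨R, hR⟩ := hY.2.2
  have hmeas i : StronglyMeasurable[ℱ i] (μ[Y i|ℱ i]) := stronglyMeasurable_condExp
  refine uniformIntegrable_of le_rfl ENNReal.one_ne_top
    (fun i => ((hmeas i).mono (hℱ i)).aestronglyMeasurable) fun ε hε => ?_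
  obtain ⟨δ, hδ, hδε⟩ := hY.unifIntegrable hε
  -- Markov's inequality makes the level sets of the conditional expectations uniformly small,
  -- and they are `ℱ i`-measurable, so the indicator can be moved inside the expectation.
  obtain ⟨C, hC⟩ := exists_forall_meas_nnnorm_ge_le
    (fun i => ((hmeas i).mono (hℱ i)).aestronglyMeasurable)
    (fun i => (eLpNorm_condExp_le_eLpNorm _ le_rfl).trans (hR i)) hδ
  refine ⟨C, fun i => ?_⟩
  have hs : MeasurableSet[ℱ i] {x | C ≤ ‖(μ[Y i|ℱ i]) x‖₊} :=
    @measurableSet_le _ _ _ _ _ (ℱ i) _ _ _ _ _ measurable_const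
      (@Measurable.nnnorm _ _ _ _ _ (ℱ i) _ (hmeas i).measurable)
  exact (eLpNorm_indicator_condExp_le ((hY.memLp i).integrable le_rfl) hs).trans
    (hδε i _ (hℱ i _ hs) (hC i))

theorem eLpNorm_condExp_sub_condExp_le {u v : Ω → ℝ} (hu : Integrable u μ)
    (hv : Integrable v μ) :
    eLpNorm (μ[u|m] - μ[v|m]) 1 μ ≤ eLpNorm (u - v) 1 μ := by
  rw [← eLpNorm_congr_ae (condExp_sub hu hv m)]
  exact eLpNorm_condExp_le_eLpNorm _ le_rfl

variable {E : Type*} [MeasurableSpace E]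

theorem eLpNorm_condExp_comp_sub_le_of_condExp_comp_ae_eq {Y Z : Ω → E}
    (hYZ : IdentDistrib Y Z μ μ) {f g : E → ℝ} (hf : Measurable f) (hg : Measurable g)
    (hfY : Integrable (fun ω => f (Y ω)) μ) (hgY : Integrable (fun ω => g (Y ω)) μ)
    (hgYZ : μ[fun ω => g (Y ω)|m] =ᵐ[μ] μ[fun ω => g (Z ω)|m]) :
    eLpNorm (μ[fun ω => f (Y ω)|m] - μ[fun ω => f (Z ω)|m]) 1 μ ≤
      2 * eLpNorm (f - g) 1 (μ.map Y) := by
  have hfZ : Integrable (fun ω => f (Z ω)) μ := (hYZ.comp hf).integrable_iff.1 hfY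
  have hgZ : Integrable (fun ω => g (Z ω)) μ := (hYZ.comp hg).integrable_iff.1 hgY
  have hsplit : μ[fun ω => f (Y ω)|m] - μ[fun ω => f (Z ω)|m] =ᵐ[μ]
      (μ[fun ω => f (Y ω)|m] - μ[fun ω => g (Y ω)|m]) +
        (μ[fun ω => g (Z ω)|m] - μ[fun ω => f (Z ω)|m]) := by
    filter_upwards [hgYZ] with ω hω
    simp only [Pi.sub_apply, Pi.add_apply, hω]
    ring
  have hmap (W : Ω → E) (hW : AEMeasurable W μ) :
      eLpNorm (f - g) 1 (μ.map W) = eLpNorm ((fun ω => f (W ω)) - fun ω => g (W ω)) 1 μ :=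
    eLpNorm_map_measure (hf.sub hg).aestronglyMeasurable hW
  calc _ = eLpNorm ((μ[fun ω => f (Y ω)|m] - μ[fun ω => g (Y ω)|m]) +
        (μ[fun ω => g (Z ω)|m] - μ[fun ω => f (Z ω)|m])) 1 μ := eLpNorm_congr_ae hsplit
    _ ≤ eLpNorm (μ[fun ω => f (Y ω)|m] - μ[fun ω => g (Y ω)|m]) 1 μ +
        eLpNorm (μ[fun ω => g (Z ω)|m] - μ[fun ω => f (Z ω)|m]) 1 μ :=
      eLpNorm_add_le (integrable_condExp.sub integrable_condExp).aestronglyMeasurable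
        (integrable_condExp.sub integrable_condExp).aestronglyMeasurable le_rfl
    _ ≤ eLpNorm ((fun ω => f (Y ω)) - fun ω => g (Y ω)) 1 μ +
        eLpNorm ((fun ω => g (Z ω)) - fun ω => f (Z ω)) 1 μ :=
      add_le_add (eLpNorm_condExp_sub_condExp_le hfY hgY) (eLpNorm_condExp_sub_condExp_le hgZ hfZ)
    _ = 2 * eLpNorm (f - g) 1 (μ.map Y) := by
      rw [two_mul, eLpNorm_sub_comm (fun ω => g (Z ω)), ← hmap Y hYZ.aemeasurable_fst,
        ← hmap Z hYZ.aemeasurable_snd, hYZ.map_eq]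

theorem condExp_comp_ae_eq_of_forall_bounded [IsFiniteMeasure μ] {Y Z : Ω → E}
    (hYZ : IdentDistrib Y Z μ μ)
    (h : ∀ g : E → ℝ, Measurable g → (∃ C, ∀ x, |g x| ≤ C) →
      μ[fun ω => g (Y ω)|m] =ᵐ[μ] μ[fun ω => g (Z ω)|m])
    {f : E → ℝ} (hf : Measurable f) (hfY : Integrable (fun ω => f (Y ω)) μ) :
    μ[fun ω => f (Y ω)|m] =ᵐ[μ] μ[fun ω => f (Z ω)|m] := by
  have hfν : MemLp f 1 (μ.map Y) := memLp_one_iff_integrable.2 <|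
    (integrable_map_measure hf.aestronglyMeasurable hYZ.aemeasurable_fst).2 hfY
  have hbound (g : SimpleFunc E ℝ) :
      eLpNorm (μ[fun ω => f (Y ω)|m] - μ[fun ω => f (Z ω)|m]) 1 μ ≤
        2 * eLpNorm (f - ⇑g) 1 (μ.map Y) := by
    obtain ⟨C, hC⟩ := g.exists_forall_norm_le
    refine eLpNorm_condExp_comp_sub_le_of_condExp_comp_ae_eq hYZ hf g.measurable hfY
      (.of_bound (g.measurable.comp_aemeasurable hYZ.aemeasurable_fst).aestronglyMeasurable C
        (Eventually.of_forall fun ω => hC _))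
      (h g g.measurable ⟨C, fun x => by simpa only [Real.norm_eq_abs] using hC x⟩)
  -- Simple functions are dense in `L¹` of the common law of `Y` and `Z`.
  have hzero : eLpNorm (μ[fun ω => f (Y ω)|m] - μ[fun ω => f (Z ω)|m]) 1 μ = 0 := by
    refine le_antisymm (ENNReal.le_of_forall_pos_le_add fun ε hε _ => ?_) zero_le
    obtain ⟨g, hg, -⟩ := hfν.exists_simpleFunc_eLpNorm_sub_lt ENNReal.one_ne_top
      (ENNReal.half_pos (ENNReal.coe_ne_zero.2 hε.ne')).ne'
    rw [zero_add, ← ENNReal.add_halves (ε : ℝ≥0∞), ← two_mul]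
    exact (hbound g).trans (by gcongr)
  rwa [eLpNorm_eq_zero_iff (integrable_condExp.sub integrable_condExp).aestronglyMeasurable
    one_ne_zero, sub_ae_eq_zero] at hzero

end MeasureTheory

theorem ProbabilityTheory.IdentDistrib.of_forall_integral_indicator_eq {Ω E : Type*}
    {mΩ : MeasurableSpace Ω} [MeasurableSpace E] {μ : Measure Ω} [IsFiniteMeasure μ]
    {Y Z : Ω → E} (hY : AEMeasurable Y μ) (hZ : AEMeasurable Z μ)
    (h : ∀ s, MeasurableSet s →
      ∫ ω, s.indicator (1 : E → ℝ) (Y ω) ∂μ = ∫ ω, s.indicator (1 : E → ℝ) (Z ω) ∂μ) :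
    IdentDistrib Y Z μ μ := by
  refine ⟨hY, hZ, Measure.ext fun s hs => ?_⟩
  rw [← measureReal_eq_measureReal_iff, ← integral_indicator_one hs, ← integral_indicator_one hs,
    integral_map hY (measurable_one.indicator hs).aestronglyMeasurable,
    integral_map hZ (measurable_one.indicator hs).aestronglyMeasurable]
  exact h s hs

namespace IsCID

variable {Ω E : Type*} {mΩ : MeasurableSpace Ω} [MeasurableSpace E] {μ : Measure Ω}
  {𝒢 : Filtration ℕ mΩ} {X : ℕ → Ω → E}

theorem identDistrib [IsFiniteMeasure μ] (hcid : IsCID μ 𝒢 X)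
    (hX : ∀ k, 1 ≤ k → Measurable (X k)) {k : ℕ} (hk : 1 ≤ k) :
    IdentDistrib (X k) (X 1) μ μ := by
  refine .of_forall_integral_indicator_eq (hX k hk).aemeasurable (hX 1 le_rfl).aemeasurable
    fun s hs => ?_
  have hbdd : ∃ C, ∀ x, |s.indicator (1 : E → ℝ) x| ≤ C :=
    ⟨1, fun x => by by_cases hx : x ∈ s <;> simp [hx]⟩
  rw [← integral_condExp (𝒢.le 0),
    integral_congr_ae (hcid _ (measurable_one.indicator hs) hbdd 0 k hk), integral_condExp (𝒢.le 0)]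

theorem condExp_ae_eq_of_integrable [IsFiniteMeasure μ] (hcid : IsCID μ 𝒢 X)
    (hX : ∀ k, 1 ≤ k → Measurable (X k)) {f : E → ℝ} (hf : Measurable f)
    (hint : Integrable (fun ω => f (X 1 ω)) μ) {n k : ℕ} (hnk : n < k) :
    μ[fun ω => f (X k ω)|𝒢 n] =ᵐ[μ] μ[fun ω => f (X (n + 1) ω)|𝒢 n] :=
  condExp_comp_ae_eq_of_forall_bounded
    ((hcid.identDistrib hX (by omega)).trans (hcid.identDistrib hX n.succ_pos).symm)
    (fun g hg hgb => hcid g hg hgb n k hnk) hf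
    (((hcid.identDistrib hX (by omega)).comp hf).integrable_iff.2 hint)

theorem martingale_condExp [IsFiniteMeasure μ] (hcid : IsCID μ 𝒢 X)
    (hX : ∀ k, 1 ≤ k → Measurable (X k)) {f : E → ℝ} (hf : Measurable f)
    (hint : Integrable (fun ω => f (X 1 ω)) μ) :
    Martingale (fun n => μ[fun ω => f (X (n + 1) ω)|𝒢 n]) 𝒢 μ :=
  ⟨fun _ => stronglyMeasurable_condExp, fun _ j hij =>
    (condExp_condExp_of_le (𝒢.mono hij) (𝒢.le j)).trans
      (hcid.condExp_ae_eq_of_integrable hX hf hint (Nat.lt_succ_of_le hij))⟩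

theorem uniformIntegrable_condExp [IsFiniteMeasure μ] (hcid : IsCID μ 𝒢 X)
    (hX : ∀ k, 1 ≤ k → Measurable (X k)) {f : E → ℝ} (hf : Measurable f)
    (hint : Integrable (fun ω => f (X 1 ω)) μ) :
    UniformIntegrable (fun n => μ[fun ω => f (X (n + 1) ω)|𝒢 n]) 1 μ :=
  UniformIntegrable.condExp (Y := fun n ω => f (X (n + 1) ω))
    (MemLp.uniformIntegrable_of_identDistrib (j := 0) le_rfl ENNReal.one_ne_top
      (memLp_one_iff_integrable.2 hint)
      fun n => ((hcid.identDistrib hX n.succ_pos).comp hf)) 𝒢.le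

end IsCID

/-- If `(X n)` is `𝒢`-c.i.d. and `E|f (X 1)| < ∞`, then there is an integrable `V` with
`E[f (X (n+1)) | 𝒢 n] → V` a.s. and in `L¹`, and `E[V | 𝒢 n] = E[f (X (n+1)) | 𝒢 n]` a.s.
for every `n`. -/
theorem stmt7 {Ω E : Type*} {mΩ : MeasurableSpace Ω} [MeasurableSpace E]
    (μ : Measure Ω) [IsProbabilityMeasure μ] (𝒢 : Filtration ℕ mΩ) (X : ℕ → Ω → E)
    (hadp : ∀ n, 1 ≤ n → Measurable[𝒢 n] (X n))
    (hcid : IsCID μ 𝒢 X)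
    (f : E → ℝ) (hf : Measurable f) (hint : Integrable (fun ω => f (X 1 ω)) μ) :
    ∃ V : Ω → ℝ, Integrable V μ ∧
      (∀ᵐ ω ∂μ, Tendsto (fun n => (μ[(fun ω' => f (X (n + 1) ω')) | 𝒢 n]) ω)
        atTop (nhds (V ω))) ∧
      Tendsto (fun n => ∫ ω, |(μ[(fun ω' => f (X (n + 1) ω')) | 𝒢 n]) ω - V ω| ∂μ)
        atTop (nhds 0) ∧
      ∀ n, μ[V | 𝒢 n] =ᵐ[μ] μ[(fun ω' => f (X (n + 1) ω')) | 𝒢 n] := by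
  have hX : ∀ k, 1 ≤ k → Measurable (X k) := fun k hk => (hadp k hk).mono (𝒢.le k) le_rfl
  have hmart := hcid.martingale_condExp hX hf hint
  have hunif := hcid.uniformIntegrable_condExp hX hf hint
  obtain ⟨R, hR⟩ := hunif.2.2
  set V := 𝒢.limitProcess (fun n => μ[fun ω => f (X (n + 1) ω)|𝒢 n]) μ
  have hV : Integrable V μ := (hmart.submartingale.memLp_limitProcess hR).integrable le_rfl
  refine ⟨V, hV, hmart.submartingale.ae_tendsto_limitProcess hR, ?_,
    fun n => (hmart.ae_eq_condExp_limitProcess hunif n).symm⟩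
  refine ((ENNReal.tendsto_toReal ENNReal.zero_ne_top).comp
    (hmart.submartingale.tendsto_eLpNorm_one_limitProcess hunif)).congr fun n => ?_
  have hmeas := ((hmart.integrable n).sub hV).aestronglyMeasurable
  rw [Function.comp_apply, toReal_eLpNorm hmeas, lpNorm_one_eq_integral_norm hmeas]
  rfl
end

section
/- If (X_n) is G-c.i.d. and f_1, ..., f_k are bounded measurable real functions on E (k > 1), then E[∏_{j=1}^k f_j(X_{n+j}) | G_n] converges almost surely and in L¹ to ∏_{j=1}^k V_{f_j}, where V_{f_j} is the a.s. limit of E[f_j(X_{n+1}) | G_n]. -/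
/-!
Write `Zₙ = E[∏_{j ≥ 1} f_j(X_{n+j}) | 𝒢ₙ]`. By the tower property and adaptedness,
`E[∏_{j ≥ 0} f_j(X_{n+j+1}) | 𝒢ₙ] = E[f₀(X_{n+1}) Z_{n+1} | 𝒢ₙ]
  = E[f₀(X_{n+1}) (Z_{n+1} - Zₙ) | 𝒢ₙ] + E[f₀(X_{n+1}) | 𝒢ₙ] Zₙ`.
By induction on the number of factors `Zₙ → ∏_{j ≥ 1} V_{f_j}` a.s., so the second term tends to
`∏_j V_{f_j}`. The first term tends to `0` by Hunt's lemma: if `Dₙ → 0` a.s. and `|Dₙ| ≤ C`, then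
`E[Dₙ | 𝒢ₙ] → 0` a.s., because `E[|Dₙ| | 𝒢ₙ] ≤ E[sup_{m ≥ N} |D_m| | 𝒢ₙ]` for `n ≥ N`, which tends
to `E[sup_{m ≥ N} |D_m| | 𝒢_∞]` by Lévy's upward theorem, and these decrease to `0` as `N → ∞`.
Convergence in `L¹` follows from the a.s. convergence by dominated convergence.
-/

open MeasureTheory Filter

open scoped Topology

lemma abs_le_iSup_abs_add {u : ℕ → ℝ} {C : ℝ} (hC : ∀ n, |u n| ≤ C) (N i : ℕ) :
    |u (N + i)| ≤ ⨆ j, |u (N + j)| :=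
  le_ciSup (f := fun j => |u (N + j)|) ⟨C, by rintro _ ⟨j, rfl⟩; exact hC _⟩ i

lemma antitone_iSup_abs_add {u : ℕ → ℝ} {C : ℝ} (hC : ∀ n, |u n| ≤ C) :
    Antitone fun N => ⨆ j, |u (N + j)| :=
  antitone_nat_of_succ_le fun N => ciSup_le fun i => by
    rw [show N + 1 + i = N + (i + 1) by omega]
    exact abs_le_iSup_abs_add hC N (i + 1)

lemma tendsto_iSup_abs_add_zero {u : ℕ → ℝ} (hu : Tendsto u atTop (𝓝 0)) :
    Tendsto (fun N => ⨆ j, |u (N + j)|) atTop (𝓝 0) := by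
  rw [Metric.tendsto_atTop] at hu ⊢
  intro ε hε
  obtain ⟨M, hM⟩ := hu (ε / 2) (half_pos hε)
  refine ⟨M, fun N hN => ?_⟩
  have hle : ⨆ j, |u (N + j)| ≤ ε / 2 :=
    ciSup_le fun j => by simpa [Real.dist_eq] using (hM (N + j) (by omega)).le
  rw [Real.dist_eq, sub_zero, abs_of_nonneg (Real.iSup_nonneg fun _ => abs_nonneg _)]
  linarith

lemma tendsto_zero_of_eventually_le_of_tendsto {α : Type*} {l : Filter α} {a : α → ℝ}
    {b : ℕ → α → ℝ} {c : ℕ → ℝ} (ha : ∀ x, 0 ≤ a x) (hab : ∀ N, ∀ᶠ x in l, a x ≤ b N x)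
    (hb : ∀ N, Tendsto (b N) l (𝓝 (c N))) (hc : Tendsto c atTop (𝓝 0)) :
    Tendsto a l (𝓝 0) := by
  refine tendsto_order.2 ⟨fun ε hε => Eventually.of_forall fun x => hε.trans_le (ha x),
    fun ε hε => ?_⟩
  obtain ⟨N, hN⟩ := (hc.eventually (gt_mem_nhds hε)).exists
  filter_upwards [hab N, (hb N).eventually (gt_mem_nhds hN)] with x h1 h2 using h1.trans_lt h2

section ConditionalExpectation

variable {Ω : Type*} {mΩ : MeasurableSpace Ω} {μ : Measure Ω} [IsFiniteMeasure μ]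

theorem ae_tendsto_condExp_abs_of_ae_tendsto_zero (𝒢 : Filtration ℕ mΩ) {D : ℕ → Ω → ℝ}
    {C : ℝ} (hD : ∀ n, AEStronglyMeasurable (D n) μ) (hC : ∀ᵐ ω ∂μ, ∀ n, |D n ω| ≤ C)
    (hlim : ∀ᵐ ω ∂μ, Tendsto (fun n => D n ω) atTop (𝓝 0)) :
    ∀ᵐ ω ∂μ, Tendsto (fun n => μ[|D n| | 𝒢 n] ω) atTop (𝓝 0) := by
  set S : ℕ → Ω → ℝ := fun N ω => ⨆ j, |D (N + j) ω|
  have hS_nonneg : ∀ N ω, 0 ≤ S N ω := fun N ω => Real.iSup_nonneg fun _ => abs_nonneg _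
  have hS_le : ∀ N, ∀ᵐ ω ∂μ, ‖S N ω‖ ≤ C := fun N => hC.mono fun ω h => by
    rw [Real.norm_of_nonneg (hS_nonneg N ω)]
    exact ciSup_le fun _ => h _
  have hS_aesm : ∀ N, AEStronglyMeasurable (S N) μ := fun N =>
    (AEMeasurable.iSup fun j => (hD (N + j)).aemeasurable.abs).aestronglyMeasurable
  have hS_int : ∀ N, Integrable (S N) μ := fun N => .of_bound (hS_aesm N) C (hS_le N)
  have hD_int : ∀ n, Integrable (D n) μ := fun n =>
    .of_bound (hD n) C (hC.mono fun ω h => h n)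
  have hsup_lim : ∀ᵐ ω ∂μ, Tendsto (fun N => μ[S N | ⨆ n, 𝒢 n] ω) atTop (𝓝 0) := by
    have hint : Tendsto (fun N => ∫ ω, μ[S N | ⨆ n, 𝒢 n] ω ∂μ) atTop (𝓝 (∫ _, (0 : ℝ) ∂μ)) := by
      simp_rw [integral_condExp (iSup_le 𝒢.le)]
      exact tendsto_integral_of_dominated_convergence (fun _ => C) hS_aesm (integrable_const C)
        hS_le (hlim.mono fun ω h => tendsto_iSup_abs_add_zero h)
    have hanti : ∀ᵐ ω ∂μ, ∀ N, μ[S (N + 1) | ⨆ n, 𝒢 n] ω ≤ μ[S N | ⨆ n, 𝒢 n] ω :=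
      ae_all_iff.2 fun N => condExp_mono (hS_int _) (hS_int _)
        (hC.mono fun ω h => antitone_iSup_abs_add h N.le_succ)
    refine tendsto_of_integral_tendsto_of_antitone (fun _ => integrable_condExp)
      (integrable_const 0) hint (hanti.mono fun ω h => antitone_nat_of_succ_le h) ?_
    exact ae_all_iff.2 fun N => condExp_nonneg (ae_of_all _ (hS_nonneg N))
  have hlevy : ∀ᵐ ω ∂μ, ∀ N,
      Tendsto (fun n => μ[S N | 𝒢 n] ω) atTop (𝓝 (μ[S N | ⨆ n, 𝒢 n] ω)) :=
    ae_all_iff.2 fun N => tendsto_ae_condExp (S N)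
  have hdom : ∀ᵐ ω ∂μ, ∀ N i, μ[|D (N + i)| | 𝒢 (N + i)] ω ≤ μ[S N | 𝒢 (N + i)] ω :=
    ae_all_iff.2 fun N => ae_all_iff.2 fun i => condExp_mono (hD_int _).abs (hS_int N)
      (hC.mono fun ω h => abs_le_iSup_abs_add h N i)
  have hnonneg : ∀ᵐ ω ∂μ, ∀ n, 0 ≤ μ[|D n| | 𝒢 n] ω :=
    ae_all_iff.2 fun n => condExp_nonneg (ae_of_all _ fun _ => abs_nonneg _)
  filter_upwards [hsup_lim, hlevy, hdom, hnonneg] with ω hsup hl hd hn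
  refine tendsto_zero_of_eventually_le_of_tendsto hn (fun N => ?_) hl hsup
  filter_upwards [eventually_ge_atTop N] with n hNn
  obtain ⟨i, rfl⟩ := Nat.exists_eq_add_of_le hNn
  exact hd N i

theorem ae_tendsto_condExp_of_ae_tendsto_zero (𝒢 : Filtration ℕ mΩ) {D : ℕ → Ω → ℝ}
    {C : ℝ} (hD : ∀ n, AEStronglyMeasurable (D n) μ) (hC : ∀ᵐ ω ∂μ, ∀ n, |D n ω| ≤ C)
    (hlim : ∀ᵐ ω ∂μ, Tendsto (fun n => D n ω) atTop (𝓝 0)) :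
    ∀ᵐ ω ∂μ, Tendsto (fun n => μ[D n | 𝒢 n] ω) atTop (𝓝 0) := by
  have habs : ∀ᵐ ω ∂μ, ∀ n, |μ[D n | 𝒢 n] ω| ≤ μ[|D n| | 𝒢 n] ω :=
    ae_all_iff.2 fun n => abs_condExp_ae_le_condExp_abs (D n)
  filter_upwards [ae_tendsto_condExp_abs_of_ae_tendsto_zero 𝒢 hD hC hlim, habs] with ω h hle
  exact squeeze_zero_norm hle h

theorem condExp_mul_condExp_of_le {m₁ m₂ : MeasurableSpace Ω} (h₁₂ : m₁ ≤ m₂) (h₂ : m₂ ≤ mΩ)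
    {Y G : Ω → ℝ} (hY : StronglyMeasurable[m₂] Y) (hYG : Integrable (Y * G) μ)
    (hG : Integrable G μ) :
    μ[Y * G | m₁] =ᵐ[μ] μ[Y * μ[G | m₂] | m₁] :=
  (condExp_condExp_of_le h₁₂ h₂).symm.trans
    (condExp_congr_ae (condExp_mul_of_stronglyMeasurable_left hY hYG hG))

theorem ae_tendsto_condExp_mul_succ (𝒢 : Filtration ℕ mΩ) {Y Z : ℕ → Ω → ℝ} {v P : Ω → ℝ}
    {A B : ℝ} (hY : ∀ n, AEStronglyMeasurable (Y n) μ) (hYA : ∀ᵐ ω ∂μ, ∀ n, |Y n ω| ≤ A)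
    (hZ : StronglyAdapted 𝒢 Z) (hZB : ∀ᵐ ω ∂μ, ∀ n, |Z n ω| ≤ B)
    (hYv : ∀ᵐ ω ∂μ, Tendsto (fun n => μ[Y n | 𝒢 n] ω) atTop (𝓝 (v ω)))
    (hZP : ∀ᵐ ω ∂μ, Tendsto (fun n => Z n ω) atTop (𝓝 (P ω))) :
    ∀ᵐ ω ∂μ, Tendsto (fun n => μ[Y n * Z (n + 1) | 𝒢 n] ω) atTop (𝓝 (v ω * P ω)) := by
  set D : ℕ → Ω → ℝ := fun n => Y n * (Z (n + 1) - Z n)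
  have hZ_aesm : ∀ n, AEStronglyMeasurable (Z n) μ := fun n =>
    ((hZ n).mono (𝒢.le n)).aestronglyMeasurable
  have hD_aesm : ∀ n, AEStronglyMeasurable (D n) μ := fun n =>
    (hY n).mul ((hZ_aesm _).sub (hZ_aesm _))
  have hD_le : ∀ᵐ ω ∂μ, ∀ n, |D n ω| ≤ A * (B + B) := by
    filter_upwards [hYA, hZB] with ω hYω hZω n
    simp only [D, Pi.mul_apply, Pi.sub_apply, abs_mul]
    exact mul_le_mul (hYω n) ((abs_sub _ _).trans (add_le_add (hZω _) (hZω _)))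
      (abs_nonneg _) ((abs_nonneg _).trans (hYω n))
  have hD_lim : ∀ᵐ ω ∂μ, Tendsto (fun n => D n ω) atTop (𝓝 0) := by
    filter_upwards [hYA, hZP] with ω hYω hZω
    have hincr : Tendsto (fun n => |Z (n + 1) ω - Z n ω|) atTop (𝓝 0) := by
      simpa using ((hZω.comp (tendsto_add_atTop_nat 1)).sub hZω).abs
    refine squeeze_zero_norm (fun n => ?_) (by simpa using hincr.const_mul A)
    simp only [D, Pi.mul_apply, Pi.sub_apply, Real.norm_eq_abs, abs_mul]
    exact mul_le_mul_of_nonneg_right (hYω n) (abs_nonneg _)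
  have hY_int : ∀ n, Integrable (Y n) μ := fun n =>
    .of_bound (hY n) A (hYA.mono fun ω h => h n)
  have hYZ_int : ∀ n, Integrable (Y n * Z n) μ := fun n =>
    .of_bound ((hY n).mul (hZ_aesm n)) (A * B) <| by
      filter_upwards [hYA, hZB] with ω hYω hZω
      rw [Pi.mul_apply, Real.norm_eq_abs, abs_mul]
      exact mul_le_mul (hYω n) (hZω n) (abs_nonneg _) ((abs_nonneg _).trans (hYω n))
  have hD_int : ∀ n, Integrable (D n) μ := fun n =>
    .of_bound (hD_aesm n) _ (hD_le.mono fun ω h => h n)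
  have hsplit : ∀ᵐ ω ∂μ, ∀ n,
      μ[Y n * Z (n + 1) | 𝒢 n] ω = μ[D n | 𝒢 n] ω + μ[Y n | 𝒢 n] ω * Z n ω := by
    refine ae_all_iff.2 fun n => ?_
    have hYZ : Y n * Z (n + 1) = D n + Y n * Z n := by
      ext ω
      simp only [D, Pi.add_apply, Pi.mul_apply, Pi.sub_apply]
      ring
    rw [hYZ]
    filter_upwards [condExp_add (hD_int n) (hYZ_int n) (𝒢 n),
      condExp_mul_of_stronglyMeasurable_right (hZ n) (hYZ_int n) (hY_int n)] with ω h1 h2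
    rw [h1, Pi.add_apply, h2, Pi.mul_apply]
  filter_upwards [hsplit, ae_tendsto_condExp_of_ae_tendsto_zero 𝒢 hD_aesm hD_le hD_lim, hYv,
    hZP] with ω hs hDω hvω hPω
  simpa [hs] using hDω.add (hvω.mul hPω)

theorem tendsto_integral_abs_sub_of_ae_tendsto {F : ℕ → Ω → ℝ} {G : Ω → ℝ} {C : ℝ}
    (hF : ∀ n, AEStronglyMeasurable (F n) μ) (hC : ∀ n, ∀ᵐ ω ∂μ, |F n ω| ≤ C)
    (hlim : ∀ᵐ ω ∂μ, Tendsto (fun n => F n ω) atTop (𝓝 (G ω))) :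
    Tendsto (fun n => ∫ ω, |F n ω - G ω| ∂μ) atTop (𝓝 0) := by
  have hG : ∀ᵐ ω ∂μ, |G ω| ≤ C := by
    filter_upwards [ae_all_iff.2 hC, hlim] with ω h hl
    exact le_of_tendsto hl.abs (Eventually.of_forall h)
  have hG_aesm : AEStronglyMeasurable G μ := aestronglyMeasurable_of_tendsto_ae atTop hF hlim
  simpa using tendsto_integral_of_dominated_convergence (fun _ => C + C)
    (fun n => ((hF n).sub hG_aesm).norm) (integrable_const _)
    (fun n => by
      filter_upwards [hC n, hG] with ω h1 h2
      rw [norm_norm]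
      exact (norm_sub_le _ _).trans (add_le_add h1 h2))
    (hlim.mono fun ω h => (h.sub tendsto_const_nhds).norm)

end ConditionalExpectation

section Products

variable {Ω E : Type*} {mΩ : MeasurableSpace Ω} {μ : Measure Ω}

lemma abs_prod_le_prod_of_abs_le {ι : Type*} [Fintype ι] {a C : ι → ℝ} (h : ∀ j, |a j| ≤ C j) :
    |∏ j, a j| ≤ ∏ j, C j :=
  (Finset.abs_prod _ _).trans_le (Finset.prod_le_prod (fun _ _ => abs_nonneg _) fun j _ => h j)

theorem ae_abs_condExp_prod_le {ι : Type*} [Fintype ι] (m : MeasurableSpace Ω)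
    {f : ι → E → ℝ} {C : ι → ℝ} (hC : ∀ j x, |f j x| ≤ C j) (Y : ι → Ω → E) :
    ∀ᵐ ω ∂μ, |μ[fun ω => ∏ j, f j (Y j ω) | m] ω| ≤ ∏ j, C j :=
  ae_bdd_abs_condExp_of_ae_bdd_abs
    (ae_of_all _ fun ω => abs_prod_le_prod_of_abs_le fun j => hC j (Y j ω))

theorem ae_tendsto_condExp_prod [MeasurableSpace E] [IsFiniteMeasure μ] (𝒢 : Filtration ℕ mΩ)
    {X : ℕ → Ω → E} (hX : ∀ n, Measurable[𝒢 (n + 1)] (X (n + 1))) {k : ℕ} (f : Fin k → E → ℝ)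
    (hf : ∀ j, Measurable (f j)) (hbd : ∀ j, ∃ C, ∀ x, |f j x| ≤ C) (V : Fin k → Ω → ℝ)
    (hV : ∀ j, ∀ᵐ ω ∂μ,
      Tendsto (fun n => μ[fun ω' => f j (X (n + 1) ω') | 𝒢 n] ω) atTop (𝓝 (V j ω))) :
    ∀ᵐ ω ∂μ, Tendsto (fun n => μ[fun ω' => ∏ j, f j (X (n + j + 1) ω') | 𝒢 n] ω)
      atTop (𝓝 (∏ j, V j ω)) := by
  induction k with
  | zero => simp [condExp_const (𝒢.le _)]
  | succ k ih =>
    choose C hC using hbd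
    set Y : ℕ → Ω → ℝ := fun n ω => f 0 (X (n + 1) ω)
    set G : ℕ → Ω → ℝ := fun n ω => ∏ j : Fin k, f j.succ (X (n + j + 1) ω)
    have hX_meas : ∀ n, Measurable (X (n + 1)) := fun n => (hX n).mono (𝒢.le _) le_rfl
    have hY_sm : ∀ n, StronglyMeasurable[𝒢 (n + 1)] (Y n) := fun n =>
      ((hf 0).comp (hX n)).stronglyMeasurable
    have hY_le : ∀ n ω, |Y n ω| ≤ C 0 := fun n ω => hC 0 _
    have hG_le : ∀ n ω, |G n ω| ≤ ∏ j : Fin k, C j.succ := fun n ω =>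
      abs_prod_le_prod_of_abs_le fun j => hC _ _
    have hG_int : ∀ n, Integrable (G n) μ := fun n =>
      .of_bound (Finset.measurable_prod _ fun j _ => (hf _).comp (hX_meas _)).aestronglyMeasurable
        _ (ae_of_all _ (hG_le n))
    have hYG_int : ∀ n, Integrable (Y n * G (n + 1)) μ := fun n =>
      (hG_int _).bdd_mul ((hY_sm n).mono (𝒢.le _)).aestronglyMeasurable (ae_of_all _ (hY_le n))
    have hprod : ∀ n, (fun ω => ∏ j : Fin (k + 1), f j (X (n + j + 1) ω)) = Y n * G (n + 1) := by
      intro n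
      ext ω
      simp only [Fin.prod_univ_succ, Fin.val_zero, Fin.val_succ, Pi.mul_apply, Y, G]
      ring_nf
    have htower : ∀ᵐ ω ∂μ, ∀ n, μ[fun ω => ∏ j : Fin (k + 1), f j (X (n + j + 1) ω) | 𝒢 n] ω =
        μ[Y n * μ[G (n + 1) | 𝒢 (n + 1)] | 𝒢 n] ω :=
      ae_all_iff.2 fun n => by
        rw [hprod n]
        exact condExp_mul_condExp_of_le (𝒢.mono n.le_succ) (𝒢.le _) (hY_sm n) (hYG_int n)
          (hG_int _)
    have hlim := ae_tendsto_condExp_mul_succ 𝒢 (Z := fun n => μ[G n | 𝒢 n])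
      (fun n => ((hY_sm n).mono (𝒢.le _)).aestronglyMeasurable) (ae_of_all _ fun ω n => hY_le n ω)
      (fun n => stronglyMeasurable_condExp)
      (ae_all_iff.2 fun n =>
        ae_abs_condExp_prod_le _ (fun j => hC j.succ) fun j : Fin k => X (n + j + 1)) (hV 0)
      (ih (fun j => f j.succ) (fun j => hf _) (fun j => ⟨C _, hC _⟩) _ fun j => hV _)
    filter_upwards [hlim, htower] with ω hω htω
    rw [Fin.prod_univ_succ]
    exact hω.congr fun n => (htω n).symm

end Products

theorem stmt8_general {Ω E : Type*} {mΩ : MeasurableSpace Ω} [MeasurableSpace E]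
    (μ : Measure Ω) [IsProbabilityMeasure μ] (𝒢 : Filtration ℕ mΩ) (X : ℕ → Ω → E)
    (hadp : ∀ n, 1 ≤ n → Measurable[𝒢 n] (X n))
    (k : ℕ) (f : Fin k → E → ℝ)
    (hf : ∀ j, Measurable (f j)) (hbd : ∀ j, ∃ C, ∀ x, |f j x| ≤ C)
    (V : Fin k → Ω → ℝ)
    (hV : ∀ j, ∀ᵐ ω ∂μ, Tendsto (fun n => (μ[(fun ω' => f j (X (n + 1) ω')) | 𝒢 n]) ω)
      atTop (nhds (V j ω))) :
    (∀ᵐ ω ∂μ,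
      Tendsto (fun n => (μ[(fun ω' => ∏ j, f j (X (n + (j : ℕ) + 1) ω')) | 𝒢 n]) ω)
        atTop (nhds (∏ j, V j ω))) ∧
    Tendsto (fun n =>
        ∫ ω, |(μ[(fun ω' => ∏ j, f j (X (n + (j : ℕ) + 1) ω')) | 𝒢 n]) ω - ∏ j, V j ω| ∂μ)
      atTop (nhds 0) := by
  have hae :=
    ae_tendsto_condExp_prod 𝒢 (fun n => hadp (n + 1) (Nat.le_add_left 1 n)) f hf hbd V hV
  choose C hC using hbd
  exact ⟨hae, tendsto_integral_abs_sub_of_ae_tendsto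
    (fun n => (stronglyMeasurable_condExp.mono (𝒢.le n)).aestronglyMeasurable)
    (fun n => ae_abs_condExp_prod_le _ hC _) hae⟩

/-- If `(X n)` is `𝒢`-c.i.d. and `f 0, …, f (k-1)` are bounded measurable (`k > 1`), then
`E[∏_j f j (X (n + j + 1)) | 𝒢 n] → ∏_j V (f j)` a.s. and in `L¹`, where `V (f j)` is the
a.s. limit of the martingale `E[f j (X (n+1)) | 𝒢 n]`. -/
theorem stmt8 {Ω E : Type*} {mΩ : MeasurableSpace Ω} [MeasurableSpace E]
    (μ : Measure Ω) [IsProbabilityMeasure μ] (𝒢 : Filtration ℕ mΩ) (X : ℕ → Ω → E)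
    (hadp : ∀ n, 1 ≤ n → Measurable[𝒢 n] (X n))
    (hcid : IsCID μ 𝒢 X)
    (k : ℕ) (hk : 1 < k) (f : Fin k → E → ℝ)
    (hf : ∀ j, Measurable (f j)) (hbd : ∀ j, ∃ C, ∀ x, |f j x| ≤ C)
    (V : Fin k → Ω → ℝ)
    (hV : ∀ j, ∀ᵐ ω ∂μ, Tendsto (fun n => (μ[(fun ω' => f j (X (n + 1) ω')) | 𝒢 n]) ω)
      atTop (nhds (V j ω))) :
    (∀ᵐ ω ∂μ,
      Tendsto (fun n => (μ[(fun ω' => ∏ j, f j (X (n + (j : ℕ) + 1) ω')) | 𝒢 n]) ω)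
        atTop (nhds (∏ j, V j ω))) ∧
    Tendsto (fun n =>
        ∫ ω, |(μ[(fun ω' => ∏ j, f j (X (n + (j : ℕ) + 1) ω')) | 𝒢 n]) ω - ∏ j, V j ω| ∂μ)
      atTop (nhds 0) :=
  stmt8_general μ 𝒢 X hadp k f hf hbd V hV
end

section
/- A sequence (X_n) is exchangeable if and only if for every finite permutation τ of {1, 2, ...}, the permuted sequence (X_{τ(n)})_n is c.i.d. -/
open MeasureTheory Filter

/-- `(X n)` (indexed from 1) is exchangeable: its finite-dimensional distributions are
invariant under permutations. -/
def IsExchangeable {Ω E : Type*} {mΩ : MeasurableSpace Ω} [MeasurableSpace E]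
    (μ : Measure Ω) (X : ℕ → Ω → E) : Prop :=
  ∀ (n : ℕ) (σ : Equiv.Perm (Fin n)),
    Measure.map (fun ω (i : Fin n) => X ((σ i : ℕ) + 1) ω) μ
      = Measure.map (fun ω (i : Fin n) => X ((i : ℕ) + 1) ω) μ

/-!
For an injective tuple `v` of positive indices write `L v` for the joint law of `(X (v i))ᵢ`.
Both conditions are equivalent to `L v` not depending on `v` (for fixed length). Exchangeability
gives this because every such tuple is the image of `(1, …, n)` under a permutation of some
`{1, …, N}`, followed by a projection onto the first coordinates. Conversely, the c.i.d. property
of `X ∘ τ`, for a finite permutation `τ` with `τ (i + 1) = v i` and `τ (m + 2) = b`, says that the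
last coordinate of `v` may be replaced by a fresh index `b`; after permuting coordinates so may
any coordinate. Replacing the coordinates of `v` one at a time by those of a tuple disjoint from
`v` and `w` then connects `L v` to `L w` for any two such tuples.
-/

open Function

theorem Equiv.Perm.exists_finite_support_apply_eq {ι α : Type*} [Fintype ι] {e g : ι → α}
    (he : Injective e) (hg : Injective g) :
    ∃ τ : Equiv.Perm α, {x | τ x ≠ x}.Finite ∧ ∀ i, τ (e i) = g i := by
  classical
  set t : Finset α := Finset.univ.image e ∪ Finset.univ.image g
  have het : ∀ i, e i ∈ t := fun i => by simp [t]
  have hgt : ∀ i, g i ∈ t := fun i => by simp [t]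
  obtain ⟨σ, hσ⟩ := Set.MapsTo.exists_equiv_extend_of_card_eq (α := t) (t := t)
    (s := {x | (x : α) ∈ Set.range e}) (f := fun x => extend e g id x) (Fintype.card_coe t)
    (by rintro x ⟨i, hi⟩; simp [← hi, he.extend_apply, hgt])
    (by rintro x ⟨i, hi⟩ y ⟨j, hj⟩ hxy
        simp only [← hi, ← hj, he.extend_apply] at hxy
        exact Subtype.ext (by rw [← hi, ← hj, hg hxy]))
  refine ⟨Equiv.Perm.ofSubtype σ, (t.finite_toSet).subset fun x hx => ?_, fun i => ?_⟩
  · by_contra hxt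
    exact hx (Equiv.Perm.ofSubtype_apply_of_not_mem σ hxt)
  · rw [Equiv.Perm.ofSubtype_apply_of_mem σ (het i), hσ ⟨e i, het i⟩ ⟨i, rfl⟩, he.extend_apply]

def IsCIDUnderFinitePerms {Ω E : Type*} {mΩ : MeasurableSpace Ω} [MeasurableSpace E]
    (μ : Measure Ω) (X : ℕ → Ω → E) : Prop :=
  ∀ τ : Equiv.Perm ℕ, τ 0 = 0 → {n : ℕ | τ n ≠ n}.Finite → IsCIDnat μ (fun n ω => X (τ n) ω)

section JointLaw

variable {Ω E : Type*} {mΩ : MeasurableSpace Ω} [MeasurableSpace E] (μ : Measure Ω)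
  (X : ℕ → Ω → E)

noncomputable def jointLaw {n : ℕ} (v : Fin n → ℕ) : Measure (Fin n → E) :=
  μ.map fun ω i => X (v i) ω

variable {μ X}

lemma jointLaw_comp (hX : ∀ n, Measurable (X n)) {m n : ℕ} (v : Fin n → ℕ) (f : Fin m → Fin n) :
    jointLaw μ X (v ∘ f) = (jointLaw μ X v).map (fun x => x ∘ f) :=
  (Measure.map_map (measurable_pi_lambda _ fun i => measurable_pi_apply (f i))
    (measurable_pi_lambda _ fun i => hX (v i))).symm

lemma jointLaw_eq_of_isExchangeable (hX : ∀ n, Measurable (X n)) (hexch : IsExchangeable μ X)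
    {n : ℕ} {v : Fin n → ℕ} (hv : Injective v) (hv0 : ∀ i, v i ≠ 0) :
    jointLaw μ X v = jointLaw μ X (fun i => i + 1) := by
  set N := max n (Finset.univ.sup v)
  have hnN : n ≤ N := le_max_left _ _
  have hvN : ∀ i, v i - 1 < N := fun i => by
    have := hv0 i
    have : v i ≤ Finset.univ.sup v := Finset.le_sup (Finset.mem_univ i)
    omega
  obtain ⟨σ, -, hσ⟩ := Equiv.Perm.exists_finite_support_apply_eq (Fin.castLE_injective hnN)
    (g := fun i => (⟨v i - 1, hvN i⟩ : Fin N)) fun i j hij => hv (by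
      have := hv0 i; have := hv0 j; simp only [Fin.mk.injEq] at hij; omega)
  have hvσ : v = (fun i => (σ i : ℕ) + 1) ∘ Fin.castLE hnN := by
    ext i
    have := hv0 i
    simp only [comp_apply, hσ]
    omega
  rw [hvσ, jointLaw_comp hX, jointLaw, hexch N σ, ← jointLaw, ← jointLaw_comp hX]
  rfl

lemma jointLaw_comp_perm_eq_iff (hX : ∀ n, Measurable (X n)) {n : ℕ} {v w : Fin n → ℕ}
    (π : Equiv.Perm (Fin n)) :
    jointLaw μ X (v ∘ π) = jointLaw μ X (w ∘ π) ↔ jointLaw μ X v = jointLaw μ X w := by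
  refine ⟨fun h => ?_, fun h => by rw [jointLaw_comp hX, jointLaw_comp hX, h]⟩
  have := congrArg (Measure.map fun x => x ∘ π.symm) h
  rwa [← jointLaw_comp hX, ← jointLaw_comp hX, comp_assoc, comp_assoc, π.self_comp_symm,
    comp_id, comp_id] at this

lemma jointLaw_update_last_eq (hcid : IsCIDUnderFinitePerms μ X) {m : ℕ} {v : Fin (m + 1) → ℕ}
    (hv : Injective v) (hv0 : ∀ i, v i ≠ 0) {b : ℕ} (hb0 : b ≠ 0) (hb : b ∉ Set.range v) :
    jointLaw μ X (update v (Fin.last m) b) = jointLaw μ X v := by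
  obtain ⟨τ, hτfin, hτ⟩ := Equiv.Perm.exists_finite_support_apply_eq Fin.val_injective
    (g := Fin.cons 0 (Fin.snoc v b)) (Fin.cons_injective_of_injective
      (by rintro ⟨i, hi⟩; cases i using Fin.lastCases <;> simp_all [eq_comm])
      (Fin.snoc_injective_of_injective hv hb))
  have hτv : ∀ i : Fin (m + 1), τ (i + 1) = v i := fun i => by simpa using hτ i.castSucc.succ
  have hτb : τ (m + 2) = b := by simpa using hτ (Fin.last (m + 1)).succ
  have hcidτ := hcid τ (hτ 0) hτfin m
  simp only [hτv, hτb] at hcidτ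
  rw [jointLaw, jointLaw, ← hcidτ]
  congr 1
  ext ω i
  rcases Fin.eq_castSucc_or_eq_last i with ⟨j, rfl⟩ | rfl
  · simp [Fin.castSucc_ne_last]
  · simp

lemma jointLaw_update_eq (hX : ∀ n, Measurable (X n)) (hcid : IsCIDUnderFinitePerms μ X)
    {n : ℕ} {v : Fin n → ℕ} (hv : Injective v) (hv0 : ∀ i, v i ≠ 0) {b : ℕ} (hb0 : b ≠ 0)
    (hb : b ∉ Set.range v) (j : Fin n) :
    jointLaw μ X (update v j b) = jointLaw μ X v := by
  obtain ⟨m, rfl⟩ : ∃ m, n = m + 1 := Nat.exists_eq_add_one_of_ne_zero j.pos.ne'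
  set π := Equiv.swap j (Fin.last m)
  have hπ : update v j b ∘ π = update (v ∘ π) (Fin.last m) b := by
    rw [update_comp_equiv, Equiv.symm_swap, Equiv.swap_apply_left]
  rw [← jointLaw_comp_perm_eq_iff hX π, hπ]
  exact jointLaw_update_last_eq hcid (hv.comp π.injective) (fun i => hv0 _) hb0
    (by rintro ⟨i, hi⟩; exact hb ⟨π i, hi⟩)

lemma jointLaw_piecewise_eq (hX : ∀ n, Measurable (X n)) (hcid : IsCIDUnderFinitePerms μ X)
    {n : ℕ} {u v : Fin n → ℕ} (hu : Injective u) (hu0 : ∀ i, u i ≠ 0) (hv : Injective v)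
    (hv0 : ∀ i, v i ≠ 0) (huv : ∀ i j, u i ≠ v j) (s : Finset (Fin n)) :
    jointLaw μ X (s.piecewise u v) = jointLaw μ X v := by
  induction s using Finset.induction_on with
  | empty => rw [Finset.piecewise_empty]
  | insert a s ha ih =>
    have hinj : Injective (s.piecewise u v) := by
      rw [← Finset.piecewise_coe, Set.injective_piecewise_iff]
      exact ⟨hu.injOn, hv.injOn, fun i _ j _ => huv i j⟩
    have hfresh : u a ∉ Set.range (s.piecewise u v) := by
      rintro ⟨i, hi⟩
      by_cases his : i ∈ s
      · rw [Finset.piecewise_eq_of_mem _ _ _ his] at hi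
        exact ha (hu hi ▸ his)
      · rw [Finset.piecewise_eq_of_notMem _ _ _ his] at hi
        exact huv a i hi.symm
    rw [Finset.piecewise_insert, jointLaw_update_eq hX hcid hinj
      (fun i => by by_cases i ∈ s <;> simp [*]) (hu0 a) hfresh, ih]

lemma jointLaw_eq_of_isCIDUnderFinitePerms (hX : ∀ n, Measurable (X n))
    (hcid : IsCIDUnderFinitePerms μ X) {n : ℕ} {v w : Fin n → ℕ} (hv : Injective v)
    (hv0 : ∀ i, v i ≠ 0) (hw : Injective w) (hw0 : ∀ i, w i ≠ 0) :
    jointLaw μ X v = jointLaw μ X w := by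
  set M := Finset.univ.sup v ⊔ Finset.univ.sup w
  have hvM : ∀ i, v i ≤ M := fun i => le_sup_of_le_left (Finset.le_sup (Finset.mem_univ i))
  have hwM : ∀ i, w i ≤ M := fun i => le_sup_of_le_right (Finset.le_sup (Finset.mem_univ i))
  have hu : Injective fun i : Fin n => M + 1 + i := fun i j h => Fin.ext (by simpa using h)
  have h := jointLaw_piecewise_eq hX hcid hu (fun i => by omega) hv hv0
    (fun i j => by have := hvM j; omega) Finset.univ
  have h' := jointLaw_piecewise_eq hX hcid hu (fun i => by omega) hw hw0
    (fun i j => by have := hwM j; omega) Finset.univ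
  rw [Finset.piecewise_univ] at h h'
  rw [← h, h']

lemma isCIDnat_comp_of_isExchangeable (hX : ∀ n, Measurable (X n)) (hexch : IsExchangeable μ X)
    {τ : Equiv.Perm ℕ} (hτ0 : τ 0 = 0) : IsCIDnat μ (fun n ω => X (τ n) ω) := by
  intro n
  have hτ {k : ℕ} {q : Fin k → ℕ} (hq : Injective q) (hq0 : ∀ i, q i ≠ 0) :
      jointLaw μ X (τ ∘ q) = jointLaw μ X (fun i => i + 1) :=
    jointLaw_eq_of_isExchangeable hX hexch (τ.injective.comp hq)
      fun i h => hq0 i (τ.injective (h.trans hτ0.symm))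
  have hcid := (hτ (q := fun i : Fin (n + 1) => if (i : ℕ) < n then i + 1 else n + 2)
      (fun i j h => Fin.ext (by simp only at h; split_ifs at h <;> omega))
      (fun i => by split_ifs <;> omega)).trans
    (hτ ((add_left_injective 1).comp Fin.val_injective) fun _ => Nat.succ_ne_zero _).symm
  refine Eq.trans (congrArg (μ.map ·) ?_) hcid
  ext ω i
  by_cases hi : (i : ℕ) < n <;> simp [hi]

lemma isExchangeable_of_isCIDUnderFinitePerms (hX : ∀ n, Measurable (X n))
    (hcid : IsCIDUnderFinitePerms μ X) : IsExchangeable μ X := fun n σ =>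
  have hsucc : Injective fun i : Fin n => (i : ℕ) + 1 :=
    (add_left_injective 1).comp Fin.val_injective
  jointLaw_eq_of_isCIDUnderFinitePerms hX hcid (hsucc.comp σ.injective)
    (fun _ => Nat.succ_ne_zero _) hsucc fun _ => Nat.succ_ne_zero _

end JointLaw

theorem stmt15_general {Ω E : Type*} {mΩ : MeasurableSpace Ω} [MeasurableSpace E]
    (μ : Measure Ω) (X : ℕ → Ω → E)
    (hX : ∀ n, Measurable (X n)) :
    IsExchangeable μ X ↔
      ∀ τ : Equiv.Perm ℕ, τ 0 = 0 → {n : ℕ | τ n ≠ n}.Finite →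
        IsCIDnat μ (fun n ω => X (τ n) ω) :=
  ⟨fun hexch _ hτ0 _ => isCIDnat_comp_of_isExchangeable hX hexch hτ0,
    isExchangeable_of_isCIDUnderFinitePerms hX⟩

/-- `(X n)` is exchangeable if and only if `(X (τ n))` is c.i.d. for every finite
permutation `τ` of `{1, 2, …}` (i.e. every permutation of `ℕ` fixing `0` and all but
finitely many indices). -/
theorem stmt15 {Ω E : Type*} {mΩ : MeasurableSpace Ω} [MeasurableSpace E]
    (μ : Measure Ω) [IsProbabilityMeasure μ] (X : ℕ → Ω → E)
    (hX : ∀ n, Measurable (X n)) :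
    IsExchangeable μ X ↔
      ∀ τ : Equiv.Perm ℕ, τ 0 = 0 → {n : ℕ | τ n ≠ n}.Finite →
        IsCIDnat μ (fun n ω => X (τ n) ω) :=
  stmt15_general (mΩ := mΩ) μ X hX
end
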